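/- arXiv:2508.10837 — 2 statements merged into one kernel-verified Lean document; each statement's English description precedes it below -/
import Mathlib

section
/- Let μ ∈ P₂(ℝ^d) and let S ⊆ P₂(TΩ)_μ⁰ be a W_μ-closed, horizontally convex positive cone of centred measure fields. Then its metric orthogonal complement S^⊥ := {ζ ∈ P₂(TΩ)_μ⁰ : ⟨ξ,ζ⟩_μ = 0 for all ξ ∈ S} is again a W_μ-closed, horizontally convex positive cone of centred measure fields. -/
open MeasureTheory Filter Metric Set
open scoped ENNReal

noncomputable section

/-- Euclidean space ℝ^d. -/
abbrev E (d : ℕ) : Type := EuclideanSpace ℝ (Fin d)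

variable {d : ℕ}

/-- `μ ∈ P₂(ℝ^d)`: Borel probability measure with finite second moment. -/
def IsP2 (μ : Measure (E d)) : Prop :=
  IsProbabilityMeasure μ ∧ Integrable (fun x => ‖x‖ ^ 2) μ

/-- `ξ ∈ P₂(TΩ)_μ`: probability measure on ℝ^d × ℝ^d with finite second moment
whose first marginal is μ (a measure field). -/
def IsMF (μ : Measure (E d)) (ξ : Measure (E d × E d)) : Prop :=
  IsProbabilityMeasure ξ ∧ Integrable (fun p => ‖p.1‖ ^ 2 + ‖p.2‖ ^ 2) ξ ∧
    ξ.map Prod.fst = μ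

/-- A measure field is centred if `∫ ⟨f x, v⟩ dξ = 0` for every bounded continuous f. -/
def IsCentred (ξ : Measure (E d × E d)) : Prop :=
  ∀ f : BoundedContinuousFunction (E d) (E d),
    ∫ p, (inner ℝ (f p.1) p.2 : ℝ) ∂ξ = 0

/-- `Γ_μ(ξ,ζ)`: plans on ℝ^d × ℝ^d × ℝ^d, `(x,v,w)`, with `(x,v)`-marginal ξ and
`(x,w)`-marginal ζ. -/
def GammaMu (ξ ζ : Measure (E d × E d)) : Set (Measure (E d × E d × E d)) :=
  {α | IsProbabilityMeasure α ∧
    α.map (fun q => (q.1, q.2.1)) = ξ ∧ α.map (fun q => (q.1, q.2.2)) = ζ}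

/-- `W_μ(ξ,ζ)²`. -/
def Wmu2 (ξ ζ : Measure (E d × E d)) : ℝ≥0∞ :=
  ⨅ (α : Measure (E d × E d × E d)) (_ : α ∈ GammaMu ξ ζ),
    ∫⁻ q, ENNReal.ofReal (‖q.2.1 - q.2.2‖ ^ 2) ∂α

/-- The metric scalar product `⟨ξ,ζ⟩_μ`. -/
def innerMu (ξ ζ : Measure (E d × E d)) : ℝ :=
  sSup ((fun α => ∫ q, (inner ℝ q.2.1 q.2.2 : ℝ) ∂α) '' GammaMu ξ ζ)

/-- `λ·ξ := (π_x, λπ_v)♯ξ`. -/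
def smulField (l : ℝ) (ξ : Measure (E d × E d)) : Measure (E d × E d) :=
  ξ.map (fun p => (p.1, l • p.2))

/-- Positive cone. -/
def IsPosCone (S : Set (Measure (E d × E d))) : Prop :=
  ∀ ξ ∈ S, ∀ l : ℝ, 0 ≤ l → smulField l ξ ∈ S

/-- Horizontal convexity. -/
def IsHorizConvex (S : Set (Measure (E d × E d))) : Prop :=
  ∀ l ∈ Icc (0:ℝ) 1, ∀ ξ ∈ S, ∀ ζ ∈ S, ∀ α ∈ GammaMu ξ ζ,
    α.map (fun q => (q.1, (1 - l) • q.2.1 + l • q.2.2)) ∈ S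

/-- `W_μ`-closedness of a set of measure fields over μ. -/
def IsWmuClosed (μ : Measure (E d)) (S : Set (Measure (E d × E d))) : Prop :=
  ∀ ξ, IsMF μ ξ → (∀ ε : ℝ≥0∞, 0 < ε → ∃ ζ ∈ S, Wmu2 ζ ξ < ε) → ξ ∈ S

/-- A Grassmannian section: measurable subspace-valued map. -/
def IsGrass (D : E d → Submodule ℝ (E d)) : Prop :=
  ∀ O : Set (E d), IsOpen O → MeasurableSet {x | ((D x : Set (E d)) ∩ O).Nonempty}

/-- Graph of a Grassmannian section. -/
def grassGraph (D : E d → Submodule ℝ (E d)) : Set (E d × E d) :=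
  {p | p.2 ∈ D p.1}

/-- Quadratic transport cost of a plan. -/
def cost2 (γ : Measure (E d × E d)) : ℝ≥0∞ :=
  ∫⁻ p, ENNReal.ofReal (‖p.1 - p.2‖ ^ 2) ∂γ

/-- Optimal transport plan (for the quadratic cost) between its marginals. -/
def IsOptimalPlan (γ : Measure (E d × E d)) : Prop :=
  IsProbabilityMeasure γ ∧
  ∀ γ' : Measure (E d × E d), IsProbabilityMeasure γ' →
    γ'.map Prod.fst = γ.map Prod.fst → γ'.map Prod.snd = γ.map Prod.snd →
    cost2 γ ≤ cost2 γ'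

/-- ξ is the velocity of a geodesic issued from μ. -/
def IsVelocity (μ : Measure (E d)) (ξ : Measure (E d × E d)) : Prop :=
  IsMF μ ξ ∧ IsOptimalPlan (ξ.map (fun p => (p.1, p.1 + p.2)))

/-- The geometric tangent cone `Tan_μ`: W_μ-closure of nonnegative dilations of
velocities of geodesics. -/
def Tan (μ : Measure (E d)) : Set (Measure (E d × E d)) :=
  {ξ | IsMF μ ξ ∧ ∀ ε : ℝ≥0∞, 0 < ε →
    ∃ l : ℝ, 0 ≤ l ∧ ∃ η, IsVelocity μ η ∧ Wmu2 (smulField l η) ξ < ε}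

/-- The solenoidal cone `Sol_μ`. -/
def Sol (μ : Measure (E d)) : Set (Measure (E d × E d)) :=
  {ζ | IsMF μ ζ ∧ ∀ ξ ∈ Tan μ, innerMu ξ ζ = 0}

/-- Centred tangent cone. -/
def Tan0 (μ : Measure (E d)) : Set (Measure (E d × E d)) :=
  Tan μ ∩ {ξ | IsCentred ξ}

/-- Centred solenoidal cone. -/
def Sol0 (μ : Measure (E d)) : Set (Measure (E d × E d)) :=
  Sol μ ∩ {ξ | IsCentred ξ}

/-- The centred metric orthogonal complement of a set of measure fields. -/
def perp0 (μ : Measure (E d)) (A : Set (Measure (E d × E d))) :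
    Set (Measure (E d × E d)) :=
  {ζ | IsMF μ ζ ∧ IsCentred ζ ∧ ∀ ξ ∈ A, innerMu ξ ζ = 0}

/-- `γ_f := ½ (id,−f)♯μ + ½ (id,f)♯μ`. -/
def gammaF (μ : Measure (E d)) (f : E d → E d) : Measure (E d × E d) :=
  (2 : ℝ≥0∞)⁻¹ • (μ.map (fun x => (x, -f x)) + μ.map (fun x => (x, f x)))

/-- 2-Wasserstein squared distance on measures on the tangent bundle ℝ^d × ℝ^d. -/
def WT2 (ξ ζ : Measure (E d × E d)) : ℝ≥0∞ :=
  ⨅ (β : Measure ((E d × E d) × (E d × E d)))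
    (_ : IsProbabilityMeasure β ∧ β.map Prod.fst = ξ ∧ β.map Prod.snd = ζ),
    ∫⁻ q, ENNReal.ofReal (‖q.1.1 - q.2.1‖ ^ 2 + ‖q.1.2 - q.2.2‖ ^ 2) ∂β

/-- DC parametrization: up to a permutation of coordinates, the graph map of a
vector of differences of convex functions on ℝ^k. -/
def IsDCParam (k d : ℕ) (Φ : E k → E d) : Prop :=
  ∃ σ : Equiv.Perm (Fin d), ∃ φ ψ : Fin d → E k → ℝ,
    (∀ i, ConvexOn ℝ Set.univ (φ i)) ∧ (∀ i, ConvexOn ℝ Set.univ (ψ i)) ∧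
    ∀ (X : E k) (i : Fin d),
      Φ X (σ i) = if h : (i : ℕ) < k then X ⟨i, h⟩ else φ i X - ψ i X

/-- DC_k set. -/
def IsDCSet (k d : ℕ) (A : Set (E d)) : Prop :=
  ∃ Φ : E k → E d, IsDCParam k d Φ ∧ A = Set.range Φ

/-- σ-DC_k set: subset of a countable union of DC_k sets. -/
def IsSigmaDC (k d : ℕ) (A : Set (E d)) : Prop :=
  ∃ B : ℕ → Set (E d), (∀ n, IsDCSet k d (B n)) ∧ A ⊆ ⋃ n, B n

/-- Subdifferential of a λ-semiconvex function. -/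
def subdiffS (l : ℝ) (φ : E d → ℝ) (x : E d) : Set (E d) :=
  {p | ∀ y, φ x + (inner ℝ p (y - x) : ℝ) - l / 2 * ‖y - x‖ ^ 2 ≤ φ y}

/-- Subdifferential of a convex function. -/
def subdiff (φ : E d → ℝ) (x : E d) : Set (E d) :=
  {p | ∀ y, φ x + (inner ℝ p (y - x) : ℝ) ≤ φ y}

/-- Dimension of a set: dimension of the direction of its affine span. -/
def setDim (s : Set (E d)) : ℕ := Module.finrank ℝ (affineSpan ℝ s).direction

/-- Tangent plane to a σ-DC_k set with respect to the cover given by the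
parametrizations `Φ n` with coordinate convex functions `φ n i`, `ψ n i`. -/
def AdmitsTangentPlane (k d : ℕ) (Φ : ℕ → E k → E d) (φ ψ : ℕ → Fin d → E k → ℝ)
    (x : E d) (P : Submodule ℝ (E d)) : Prop :=
  ∀ n, x ∈ Set.range (Φ n) → ∀ X : E k, Φ n X = x →
    (∀ i : Fin d, DifferentiableAt ℝ (φ n i) X ∧ DifferentiableAt ℝ (ψ n i) X) ∧
    ∃ DΦ : E k →L[ℝ] E d, HasFDerivAt (Φ n) DΦ X ∧ LinearMap.range (DΦ : E k →ₗ[ℝ] E d) = P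

/-- Preiss tangent measure of μ at x. -/
def IsPreissTangent (μ : Measure (E d)) (x : E d) (ν : Measure (E d)) : Prop :=
  ∃ c : ℝ, 0 < c ∧ ∃ h : ℕ → ℝ, (∀ n, h n ∈ Set.Ioc (0:ℝ) 1) ∧
    Tendsto h atTop (nhds 0) ∧
    ∀ φ : E d → ℝ, Continuous φ → HasCompactSupport φ →
      Tendsto (fun n => (c / (μ (ball x (h n))).toReal) *
        ∫ y, φ ((h n)⁻¹ • (y - x)) ∂μ) atTop (nhds (∫ y, φ y ∂ν))

/-- The set where a Grassmannian section has dimension k. -/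
def dimSet (D : E d → Submodule ℝ (E d)) (k : ℕ) : Set (E d) :=
  {x | Module.finrank ℝ (D x) = k}


section AuxStmt1

open ProbabilityTheory

instance : BorelSpace ((E d × E d × E d) × E d) := Prod.borelSpace
instance : OpensMeasurableSpace ((E d × E d × E d) × E d) := Prod.opensMeasurableSpace
instance : BorelSpace ((E d × E d) × E d) := Prod.borelSpace
instance : OpensMeasurableSpace ((E d × E d) × E d) := Prod.opensMeasurableSpace

lemma nonpos_of_forall_le {a : ℝ} (h : ∀ c : ℝ, 0 < c → a ≤ c) : a ≤ 0 := by
  by_contra hc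
  push_neg at hc
  have := h (a / 2) (by linarith)
  linarith

lemma integral_marg {X Y F : Type*} [MeasurableSpace X] [MeasurableSpace Y]
    [NormedAddCommGroup F] [NormedSpace ℝ F]
    {ξ : Measure X} {ν : Measure Y} {g : X → Y} (hg : Measurable g)
    (hmap : ξ.map g = ν) {f : Y → F} (hf : AEStronglyMeasurable f ν) :
    ∫ y, f y ∂ν = ∫ x, f (g x) ∂ξ := by
  subst hmap
  exact integral_map hg.aemeasurable hf

lemma integrable_marg {X Y F : Type*} [MeasurableSpace X] [MeasurableSpace Y]
    [NormedAddCommGroup F]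
    {ξ : Measure X} {ν : Measure Y} {g : X → Y} (hg : Measurable g)
    (hmap : ξ.map g = ν) {f : Y → F} (hf : AEStronglyMeasurable f ν)
    (hi : Integrable f ν) : Integrable (fun x => f (g x)) ξ := by
  subst hmap
  exact (integrable_map_measure hf hg.aemeasurable).mp hi

lemma IsMF.m1 {μ : Measure (E d)} {ξ : Measure (E d × E d)} (h : IsMF μ ξ) :
    Integrable (fun p : E d × E d => ‖p.1‖ ^ 2) ξ := by
  refine h.2.1.mono' ?_ (Eventually.of_forall fun p => ?_)
  · have h : Continuous (fun p : E d × E d => ‖p.1‖ ^ 2) := by fun_prop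
    exact h.aestronglyMeasurable
  · simp only [Real.norm_eq_abs, abs_of_nonneg (by positivity : (0:ℝ) ≤ ‖p.1‖ ^ 2)]
    nlinarith [sq_nonneg ‖p.2‖]

lemma IsMF.m2 {μ : Measure (E d)} {ξ : Measure (E d × E d)} (h : IsMF μ ξ) :
    Integrable (fun p : E d × E d => ‖p.2‖ ^ 2) ξ := by
  refine h.2.1.mono' ?_ (Eventually.of_forall fun p => ?_)
  · have h : Continuous (fun p : E d × E d => ‖p.2‖ ^ 2) := by fun_prop
    exact h.aestronglyMeasurable
  · simp only [Real.norm_eq_abs, abs_of_nonneg (by positivity : (0:ℝ) ≤ ‖p.2‖ ^ 2)]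
    nlinarith [sq_nonneg ‖p.1‖]

lemma integrable_inner_of_sq {Z : Type*} [MeasurableSpace Z] {α : Measure Z}
    {a b : Z → E d} (hc : AEStronglyMeasurable (fun z => (inner ℝ (a z) (b z) : ℝ)) α)
    (h2a : Integrable (fun z => ‖a z‖ ^ 2) α) (h2b : Integrable (fun z => ‖b z‖ ^ 2) α) :
    Integrable (fun z => (inner ℝ (a z) (b z) : ℝ)) α := by
  refine ((h2a.add h2b).div_const 2).mono' hc (Eventually.of_forall fun z => ?_)
  have h1 : |(inner ℝ (a z) (b z) : ℝ)| ≤ ‖a z‖ * ‖b z‖ := abs_real_inner_le_norm _ _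
  have h2 : ‖a z‖ * ‖b z‖ ≤ (‖a z‖ ^ 2 + ‖b z‖ ^ 2) / 2 := by
    nlinarith [sq_nonneg (‖a z‖ - ‖b z‖)]
  simpa [Real.norm_eq_abs] using h1.trans h2

/-- the plan value `∫ ⟨v, w⟩`. -/
lemma pval_le {μ : Measure (E d)} {ξ ζ : Measure (E d × E d)}
    {α : Measure (E d × E d × E d)}
    (hξ : IsMF μ ξ) (hζ : IsMF μ ζ) (hα : α ∈ GammaMu ξ ζ) :
    ∫ q, (inner ℝ q.2.1 q.2.2 : ℝ) ∂α ≤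
      (∫ p, ‖p.2‖ ^ 2 ∂ξ + ∫ p, ‖p.2‖ ^ 2 ∂ζ) / 2 := by
  obtain ⟨hp, h1, h2⟩ := hα
  have hm1 : Measurable (fun q : E d × E d × E d => (q.1, q.2.1)) := by fun_prop
  have hm2 : Measurable (fun q : E d × E d × E d => (q.1, q.2.2)) := by fun_prop
  have hcont : Continuous (fun p : E d × E d => ‖p.2‖ ^ 2) := by fun_prop
  have Iv : Integrable (fun q : E d × E d × E d => ‖q.2.1‖ ^ 2) α :=
    integrable_marg hm1 h1 hcont.aestronglyMeasurable hξ.m2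
  have Iw : Integrable (fun q : E d × E d × E d => ‖q.2.2‖ ^ 2) α :=
    integrable_marg hm2 h2 hcont.aestronglyMeasurable hζ.m2
  have hcinn : Continuous (fun q : E d × E d × E d => (inner ℝ q.2.1 q.2.2 : ℝ)) :=
    continuous_snd.fst.inner continuous_snd.snd
  have Iinner : Integrable (fun q : E d × E d × E d => (inner ℝ q.2.1 q.2.2 : ℝ)) α :=
    integrable_inner_of_sq hcinn.aestronglyMeasurable Iv Iw
  have hpt : ∀ q : E d × E d × E d,
      (inner ℝ q.2.1 q.2.2 : ℝ) ≤ (‖q.2.1‖ ^ 2 + ‖q.2.2‖ ^ 2) / 2 := by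
    intro q
    have := real_inner_le_norm q.2.1 q.2.2
    nlinarith [sq_nonneg (‖q.2.1‖ - ‖q.2.2‖)]
  calc ∫ q, (inner ℝ q.2.1 q.2.2 : ℝ) ∂α
      ≤ ∫ q, (‖q.2.1‖ ^ 2 + ‖q.2.2‖ ^ 2) / 2 ∂α :=
        integral_mono Iinner ((Iv.add Iw).div_const 2) hpt
    _ = (∫ p, ‖p.2‖ ^ 2 ∂ξ + ∫ p, ‖p.2‖ ^ 2 ∂ζ) / 2 := by
        rw [integral_div, integral_add Iv Iw,
          integral_marg hm1 h1 hcont.aestronglyMeasurable,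
          integral_marg hm2 h2 hcont.aestronglyMeasurable]

lemma bddAbove_pval {μ : Measure (E d)} {ξ ζ : Measure (E d × E d)}
    (hξ : IsMF μ ξ) (hζ : IsMF μ ζ) :
    BddAbove ((fun α => ∫ q, (inner ℝ q.2.1 q.2.2 : ℝ) ∂α) '' GammaMu ξ ζ) := by
  refine ⟨(∫ p, ‖p.2‖ ^ 2 ∂ξ + ∫ p, ‖p.2‖ ^ 2 ∂ζ) / 2, ?_⟩
  rintro x ⟨α, hα, rfl⟩
  exact pval_le hξ hζ hα

lemma pval_nonpos {μ : Measure (E d)} {ξ ζ : Measure (E d × E d)}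
    {α : Measure (E d × E d × E d)}
    (hξ : IsMF μ ξ) (hζ : IsMF μ ζ) (h0 : innerMu ξ ζ = 0) (hα : α ∈ GammaMu ξ ζ) :
    ∫ q, (inner ℝ q.2.1 q.2.2 : ℝ) ∂α ≤ 0 := by
  have h := le_csSup (bddAbove_pval hξ hζ) (mem_image_of_mem _ hα)
  exact h.trans (le_of_eq h0)

lemma measure_prod_ext {X Y : Type*} [MeasurableSpace X] [MeasurableSpace Y]
    {μ ν : Measure (X × Y)} [IsFiniteMeasure μ] [IsFiniteMeasure ν]
    (h : ∀ s t, MeasurableSet s → MeasurableSet t → μ (s ×ˢ t) = ν (s ×ˢ t)) :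
    μ = ν := by
  refine MeasureTheory.ext_of_generate_finite _ generateFrom_prod.symm isPiSystem_prod ?_ ?_
  · rintro _ ⟨s, hs, t, ht, rfl⟩
    exact h s t hs ht
  · simpa [univ_prod_univ] using h univ univ MeasurableSet.univ MeasurableSet.univ

/-- Gluing lemma. -/
lemma glue {B C U : Type*} [MeasurableSpace B] [MeasurableSpace C]
    [MeasurableSpace U] [StandardBorelSpace U] [Nonempty U]
    (P : Measure (B × U)) [IsProbabilityMeasure P] (Q : Measure C) [IsProbabilityMeasure Q]
    {t : C → B} (ht : Measurable t) (hQt : Q.map t = P.map Prod.fst) :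
    ∃ R : Measure (C × U), IsProbabilityMeasure R ∧ R.map Prod.fst = Q ∧
      R.map (fun r => (t r.1, r.2)) = P := by
  refine ⟨Q ⊗ₘ (P.condKernel.comap t ht), inferInstance, ?_, ?_⟩
  · rw [show (Q ⊗ₘ (P.condKernel.comap t ht)).map Prod.fst
        = (Q ⊗ₘ (P.condKernel.comap t ht)).fst from rfl]
    exact Measure.fst_compProd Q _
  · have hPfst : P.map Prod.fst = P.fst := rfl
    refine measure_prod_ext fun s u hs hu => ?_
    rw [Measure.map_apply (by fun_prop) (hs.prod hu)]
    have hpre : (fun r : C × U => (t r.1, r.2)) ⁻¹' (s ×ˢ u) = (t ⁻¹' s) ×ˢ u := rfl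
    rw [hpre, Measure.compProd_apply_prod (ht hs) hu]
    have h1 : ∫⁻ c in t ⁻¹' s, (P.condKernel.comap t ht) c u ∂Q
        = ∫⁻ b in s, P.condKernel b u ∂(Q.map t) := by
      rw [setLIntegral_map hs (Kernel.measurable_coe _ hu) ht]
      rfl
    rw [h1, hQt, hPfst]
    conv_rhs => rw [← P.disintegrate P.condKernel]
    rw [Measure.compProd_apply_prod hs hu]

end AuxStmt1

section Coupling

open ProbabilityTheory

variable {μ : Measure (E d)} {ξ η : Measure (E d × E d)}

lemma isProb_base (hξ : IsMF μ ξ) : IsProbabilityMeasure μ := by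
  haveI := hξ.1
  exact hξ.2.2 ▸ Measure.isProbabilityMeasure_map measurable_fst.aemeasurable

lemma IsMF.fst_eq (hξ : IsMF μ ξ) : ξ.fst = μ := hξ.2.2

lemma IsMF.disint [IsFiniteMeasure ξ] (hξ : IsMF μ ξ) : μ ⊗ₘ ξ.condKernel = ξ := by
  haveI := hξ.1
  exact hξ.fst_eq ▸ ξ.disintegrate ξ.condKernel

lemma IsMF.int_snd (hξ : IsMF μ ξ) : Integrable (fun p : E d × E d => p.2) ξ := by
  haveI := hξ.1
  have hc : Continuous (fun p : E d × E d => p.2) := continuous_snd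
  refine ((integrable_const (1:ℝ)).add hξ.m2).mono' hc.aestronglyMeasurable
    (Eventually.of_forall fun p => ?_)
  simp only [Pi.add_apply]
  nlinarith [sq_nonneg (‖p.2‖ - 1), norm_nonneg p.2]

lemma integrable_bcf_inner {Z : Type*} [MeasurableSpace Z] {α : Measure Z} [IsFiniteMeasure α]
    (f : BoundedContinuousFunction (E d) (E d)) {x v : Z → E d}
    (hsm : AEStronglyMeasurable (fun z => (inner ℝ (f (x z)) (v z) : ℝ)) α)
    (h2 : Integrable (fun z => ‖v z‖ ^ 2) α) :
    Integrable (fun z => (inner ℝ (f (x z)) (v z) : ℝ)) α := by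
  refine (((integrable_const (1:ℝ)).add h2).const_mul ‖f‖).mono' hsm
    (Eventually.of_forall fun z => ?_)
  have h1 : |(inner ℝ (f (x z)) (v z) : ℝ)| ≤ ‖f (x z)‖ * ‖v z‖ := abs_real_inner_le_norm _ _
  have h2' : ‖f (x z)‖ ≤ ‖f‖ := f.norm_coe_le_norm _
  have h3 : ‖v z‖ ≤ 1 + ‖v z‖ ^ 2 := by nlinarith [sq_nonneg (‖v z‖ - 1)]
  have h4 : (0:ℝ) ≤ ‖v z‖ := norm_nonneg _
  have h5 : (0:ℝ) ≤ ‖f‖ := norm_nonneg _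
  simp only [Pi.add_apply, Real.norm_eq_abs]
  nlinarith

set_option maxHeartbeats 2000000 in
lemma barycenter_ae_zero [IsFiniteMeasure ξ] (hξ : IsMF μ ξ) (hcen : IsCentred ξ) :
    (fun x => ∫ v, v ∂ξ.condKernel x) =ᵐ[μ] 0 := by
  haveI := hξ.1
  haveI := isProb_base hξ
  have hdis : μ ⊗ₘ ξ.condKernel = ξ := hξ.disint
  set κ := ξ.condKernel with hκ
  set b : E d → E d := fun x => ∫ v, v ∂κ x with hb
  have hsm : StronglyMeasurable b := by
    have h : StronglyMeasurable (fun p : E d × E d => p.2) :=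
      measurable_snd.stronglyMeasurable
    exact h.integral_kernel_prod_right'
  have hIsnd : Integrable (fun p : E d × E d => p.2) (μ ⊗ₘ κ) := by
    rw [hdis]; exact hξ.int_snd
  have hiff := (Measure.integrable_compProd_iff hIsnd.1).mp hIsnd
  have hae : ∀ᵐ x ∂μ, Integrable (fun v : E d => v) (κ x) := hiff.1
  have hnorm : Integrable (fun x => ∫ v, ‖v‖ ∂κ x) μ := hiff.2
  have hIb : Integrable b μ := by
    refine hnorm.mono' hsm.aestronglyMeasurable (Eventually.of_forall fun x => ?_)
    exact norm_integral_le_integral_norm _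
  refine ae_eq_zero_of_integral_contDiff_smul_eq_zero hIb.locallyIntegrable ?_
  intro g hg hgs
  obtain ⟨C, hC⟩ := hgs.exists_bound_of_continuous hg.continuous
  have hIgb : Integrable (fun x => g x • b x) μ := by
    refine (hIb.norm.const_mul C).mono'
      (hg.continuous.aestronglyMeasurable.smul hIb.1)
      (Eventually.of_forall fun x => ?_)
    rw [norm_smul]
    exact mul_le_mul_of_nonneg_right (hC x) (norm_nonneg _)
  have hinner : ∀ c : E d, (inner ℝ c (∫ x, g x • b x ∂μ) : ℝ) = 0 := by
    intro c
    rw [← integral_inner hIgb c]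
    let f₀ : BoundedContinuousFunction (E d) (E d) :=
      BoundedContinuousFunction.ofNormedAddCommGroup (fun x => g x • c)
        (hg.continuous.smul continuous_const) (C * ‖c‖) (fun x => by
          rw [norm_smul]
          exact mul_le_mul_of_nonneg_right (hC x) (norm_nonneg _))
    have hf₀ : ∀ x : E d, f₀ x = g x • c := fun x => rfl
    have hcf := hcen f₀
    have hcinn : Continuous (fun p : E d × E d => (inner ℝ (f₀ p.1) p.2 : ℝ)) :=
      (f₀.continuous.comp continuous_fst).inner continuous_snd
    have hint : Integrable (fun p : E d × E d => (inner ℝ (f₀ p.1) p.2 : ℝ)) (μ ⊗ₘ κ) := by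
      rw [hdis]
      exact integrable_bcf_inner f₀ hcinn.aestronglyMeasurable hξ.m2
    have hrw : ∫ p, (inner ℝ (f₀ p.1) p.2 : ℝ) ∂ξ
        = ∫ x, ∫ v, (inner ℝ (f₀ x) v : ℝ) ∂κ x ∂μ := by
      rw [← hdis, Measure.integral_compProd hint]
    rw [hrw] at hcf
    rw [← hcf]
    refine integral_congr_ae ?_
    filter_upwards [hae] with x hx
    rw [integral_inner hx (f₀ x), hf₀, real_inner_smul_left, real_inner_smul_right]
  have h0 : ∫ x, g x • b x ∂μ = 0 := by
    have := hinner (∫ x, g x • b x ∂μ)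
    exact inner_self_eq_zero.mp this
  exact h0

set_option maxHeartbeats 2000000 in
lemma exists_coupling_pval_zero (hξ : IsMF μ ξ) (hη : IsMF μ η) (hcen : IsCentred ξ) :
    ∃ θ ∈ GammaMu ξ η, ∫ q, (inner ℝ q.2.1 q.2.2 : ℝ) ∂θ = 0 := by
  haveI := hξ.1
  haveI := hη.1
  haveI := isProb_base hξ
  set κ₁ := ξ.condKernel with hκ₁
  set κ₂ := η.condKernel with hκ₂
  have hm1 : Measurable (fun q : E d × E d × E d => (q.1, q.2.1)) := by fun_prop
  have hm2 : Measurable (fun q : E d × E d × E d => (q.1, q.2.2)) := by fun_prop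
  set θ : Measure (E d × E d × E d) := μ ⊗ₘ (κ₁ ×ₖ κ₂) with hθ
  haveI : IsProbabilityMeasure θ := by rw [hθ]; infer_instance
  have hmarg1 : θ.map (fun q => (q.1, q.2.1)) = ξ := by
    have h : θ.map (fun q => (q.1, q.2.1)) = μ ⊗ₘ κ₁ := by
      refine measure_prod_ext fun s u hs hu => ?_
      rw [Measure.map_apply hm1 (hs.prod hu)]
      have hpre : (fun q : E d × E d × E d => (q.1, q.2.1)) ⁻¹' (s ×ˢ u)
          = s ×ˢ (u ×ˢ univ) := by
        ext q; simp [Set.mem_prod, and_assoc]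
      rw [hpre, hθ, Measure.compProd_apply_prod hs (hu.prod MeasurableSet.univ),
        Measure.compProd_apply_prod hs hu]
      refine setLIntegral_congr_fun hs (fun x _ => ?_)
      rw [Kernel.prod_apply, Measure.prod_prod, measure_univ, mul_one]
    rw [h, hξ.disint]
  have hmarg2 : θ.map (fun q => (q.1, q.2.2)) = η := by
    have h : θ.map (fun q => (q.1, q.2.2)) = μ ⊗ₘ κ₂ := by
      refine measure_prod_ext fun s u hs hu => ?_
      rw [Measure.map_apply hm2 (hs.prod hu)]
      have hpre : (fun q : E d × E d × E d => (q.1, q.2.2)) ⁻¹' (s ×ˢ u)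
          = s ×ˢ (univ ×ˢ u) := by
        ext q; simp [Set.mem_prod]
      rw [hpre, hθ, Measure.compProd_apply_prod hs (MeasurableSet.univ.prod hu),
        Measure.compProd_apply_prod hs hu]
      refine setLIntegral_congr_fun hs (fun x _ => ?_)
      rw [Kernel.prod_apply, Measure.prod_prod, measure_univ, one_mul]
    rw [h, hη.disint]
  refine ⟨θ, ⟨inferInstance, hmarg1, hmarg2⟩, ?_⟩
  have hcsq : Continuous (fun p : E d × E d => ‖p.2‖ ^ 2) := by fun_prop
  have Iv : Integrable (fun q : E d × E d × E d => ‖q.2.1‖ ^ 2) θ :=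
    integrable_marg hm1 hmarg1 hcsq.aestronglyMeasurable hξ.m2
  have Iw : Integrable (fun q : E d × E d × E d => ‖q.2.2‖ ^ 2) θ :=
    integrable_marg hm2 hmarg2 hcsq.aestronglyMeasurable hη.m2
  have hcinn : Continuous (fun q : E d × E d × E d => (inner ℝ q.2.1 q.2.2 : ℝ)) :=
    continuous_snd.fst.inner continuous_snd.snd
  have Iinner : Integrable (fun q : E d × E d × E d => (inner ℝ q.2.1 q.2.2 : ℝ)) θ :=
    integrable_inner_of_sq hcinn.aestronglyMeasurable Iv Iw
  have Iinner' : Integrable (fun q : E d × E d × E d => (inner ℝ q.2.1 q.2.2 : ℝ))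
      (μ ⊗ₘ (κ₁ ×ₖ κ₂)) := by rw [← hθ]; exact Iinner
  have hsec : ∀ᵐ x ∂μ,
      Integrable (fun p : E d × E d => (inner ℝ p.1 p.2 : ℝ)) ((κ₁ ×ₖ κ₂) x) :=
    ((Measure.integrable_compProd_iff Iinner'.1).mp Iinner').1
  have hv1 : ∀ᵐ x ∂μ, Integrable (fun v : E d => v) (κ₁ x) := by
    have h := hξ.int_snd
    rw [← hξ.disint] at h
    exact ((Measure.integrable_compProd_iff h.1).mp h).1
  have hv2 : ∀ᵐ x ∂μ, Integrable (fun v : E d => v) (κ₂ x) := by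
    have h := hη.int_snd
    rw [← hη.disint] at h
    exact ((Measure.integrable_compProd_iff h.1).mp h).1
  have hbar := barycenter_ae_zero hξ hcen
  rw [hθ, Measure.integral_compProd Iinner']
  refine integral_eq_zero_of_ae ?_
  filter_upwards [hsec, hv1, hv2, hbar] with x h1 h2 h3 h4
  rw [Kernel.prod_apply] at h1
  rw [Kernel.prod_apply, integral_prod _ h1]
  have hstep : ∀ u : E d, ∫ w, (inner ℝ u w : ℝ) ∂κ₂ x = (inner ℝ (∫ w, w ∂κ₂ x) u : ℝ) := by
    intro u
    rw [integral_inner h3 u]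
    exact real_inner_comm _ _
  simp_rw [hstep]
  rw [integral_inner h2]
  have h4' : ∫ v, v ∂κ₁ x = 0 := by simpa using h4
  rw [h4', inner_zero_right]
  simp

end Coupling

section MainParts

open ProbabilityTheory

lemma am_gm_norm {x : E d} {δ : ℝ} (hδ : 0 < δ) : ‖x‖ ≤ δ / 2 + ‖x‖ ^ 2 / (2 * δ) := by
  have h2δ : (0:ℝ) < 2 * δ := by linarith
  have he : δ / 2 + ‖x‖ ^ 2 / (2 * δ) = (δ ^ 2 + ‖x‖ ^ 2) / (2 * δ) := by
    field_simp
  rw [he, le_div_iff₀ h2δ]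
  nlinarith [sq_nonneg (‖x‖ - δ)]

lemma am_gm2 {a b δ : ℝ} (hδ : 0 < δ) : a * b ≤ δ / 2 * a ^ 2 + b ^ 2 / (2 * δ) := by
  have h2δ : (0:ℝ) < 2 * δ := by linarith
  rw [← mul_le_mul_iff_right₀ h2δ]
  have he : 2 * δ * (δ / 2 * a ^ 2 + b ^ 2 / (2 * δ)) = δ ^ 2 * a ^ 2 + b ^ 2 := by
    field_simp
  rw [he]
  nlinarith [sq_nonneg (δ * a - b)]

set_option maxHeartbeats 2000000 in
lemma perp_smul {μ : Measure (E d)} {S : Set (Measure (E d × E d))}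
    (hSsub : S ⊆ {ξ | IsMF μ ξ ∧ IsCentred ξ})
    {ζ : Measure (E d × E d)} (hζ : ζ ∈ perp0 μ S) (l : ℝ) (hl : 0 ≤ l) :
    smulField l ζ ∈ perp0 μ S := by
  obtain ⟨hζMF, hζC, hζperp⟩ := hζ
  haveI := hζMF.1
  have hg : Measurable (fun p : E d × E d => (p.1, l • p.2)) := by fun_prop
  have hm1 : Measurable (fun q : E d × E d × E d => (q.1, q.2.1)) := by fun_prop
  have hm2 : Measurable (fun q : E d × E d × E d => (q.1, q.2.2)) := by fun_prop
  have hcinn : Continuous (fun q : E d × E d × E d => (inner ℝ q.2.1 q.2.2 : ℝ)) :=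
    continuous_snd.fst.inner continuous_snd.snd
  have hMF : IsMF μ (smulField l ζ) := by
    refine ⟨Measure.isProbabilityMeasure_map hg.aemeasurable, ?_, ?_⟩
    · have hcont : Continuous (fun p : E d × E d => ‖p.1‖ ^ 2 + ‖p.2‖ ^ 2) := by fun_prop
      rw [smulField]
      refine (integrable_map_measure hcont.aestronglyMeasurable hg.aemeasurable).mpr ?_
      have hcont2 : Continuous (fun p : E d × E d => ‖p.1‖ ^ 2 + ‖l • p.2‖ ^ 2) := by fun_prop
      refine (hζMF.2.1.const_mul (1 + l ^ 2)).mono' hcont2.aestronglyMeasurable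
        (Eventually.of_forall fun p => ?_)
      simp only [Function.comp, Real.norm_eq_abs]
      have h1 : ‖l • p.2‖ = |l| * ‖p.2‖ := by rw [norm_smul, Real.norm_eq_abs]
      rw [abs_of_nonneg (by positivity)]
      have h2 : ‖l • p.2‖ ^ 2 = l ^ 2 * ‖p.2‖ ^ 2 := by rw [h1, mul_pow, sq_abs]
      nlinarith [sq_nonneg ‖p.1‖, sq_nonneg ‖p.2‖, sq_nonneg l, sq_nonneg (l * ‖p.1‖)]
    · rw [smulField, Measure.map_map measurable_fst hg]
      exact hζMF.2.2
  have hC : IsCentred (smulField l ζ) := by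
    intro f
    have hcinnf : Continuous (fun p : E d × E d => (inner ℝ (f p.1) p.2 : ℝ)) :=
      (f.continuous.comp continuous_fst).inner continuous_snd
    rw [smulField, integral_map hg.aemeasurable hcinnf.aestronglyMeasurable]
    have hpt : ∀ p : E d × E d,
        (inner ℝ (f (p.1, l • p.2).1) (p.1, l • p.2).2 : ℝ) = l * inner ℝ (f p.1) p.2 :=
      fun p => real_inner_smul_right _ _ _
    rw [integral_congr_ae (Eventually.of_forall hpt), integral_const_mul, hζC f, mul_zero]
  refine ⟨hMF, hC, ?_⟩
  intro ξ hξS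
  obtain ⟨hξMF, hξC⟩ := hSsub hξS
  haveI := hξMF.1
  have hbddB := bddAbove_pval hξMF hMF
  rcases eq_or_lt_of_le hl with hl0 | hlpos
  · -- l = 0
    subst hl0
    have hsm0 : smulField (0:ℝ) ζ = μ.map (fun x => (x, (0 : E d))) := by
      rw [smulField]
      have he : (fun p : E d × E d => (p.1, (0:ℝ) • p.2))
          = (fun x : E d => (x, (0:E d))) ∘ Prod.fst := by
        funext p; simp
      rw [he, ← Measure.map_map (by fun_prop) measurable_fst, hζMF.2.2]
    have hNmeas : MeasurableSet {p : E d × E d | p.2 ≠ 0} :=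
      (measurableSet_singleton (0 : E d)).compl.preimage measurable_snd
    have hval : ∀ β ∈ GammaMu ξ (smulField (0:ℝ) ζ),
        ∫ q, (inner ℝ q.2.1 q.2.2 : ℝ) ∂β = 0 := by
      intro β hβ
      haveI := hβ.1
      have h1 : β {q : E d × E d × E d | q.2.2 ≠ 0} = 0 := by
        have hpre : (fun q : E d × E d × E d => (q.1, q.2.2)) ⁻¹' {p : E d × E d | p.2 ≠ 0}
            = {q : E d × E d × E d | q.2.2 ≠ 0} := rfl
        rw [← hpre, ← Measure.map_apply hm2 hNmeas, hβ.2.2, hsm0,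
          Measure.map_apply (by fun_prop) hNmeas]
        simp
      have hzero : ∀ᵐ q : E d × E d × E d ∂β, q.2.2 = 0 := by
        rw [ae_iff]
        exact h1
      calc ∫ q, (inner ℝ q.2.1 q.2.2 : ℝ) ∂β
          = ∫ _q, (0:ℝ) ∂β := integral_congr_ae (by
            filter_upwards [hzero] with q hq
            rw [hq, inner_zero_right])
        _ = 0 := integral_zero _ _
    have hmem : ξ.map (fun p => (p.1, p.2, (0:E d))) ∈ GammaMu ξ (smulField (0:ℝ) ζ) := by
      refine ⟨Measure.isProbabilityMeasure_map (by fun_prop), ?_, ?_⟩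
      · rw [Measure.map_map hm1 (by fun_prop)]
        have he : ((fun q : E d × E d × E d => (q.1, q.2.1))
            ∘ (fun p : E d × E d => (p.1, p.2, (0:E d)))) = id := by
          funext p; rfl
        rw [he, Measure.map_id]
      · rw [Measure.map_map hm2 (by fun_prop), hsm0]
        have he : ((fun q : E d × E d × E d => (q.1, q.2.2))
            ∘ (fun p : E d × E d => (p.1, p.2, (0:E d))))
            = (fun x : E d => (x, (0:E d))) ∘ Prod.fst := rfl
        rw [he, ← Measure.map_map (by fun_prop) measurable_fst, hξMF.2.2]
    refine le_antisymm (Real.sSup_le ?_ le_rfl) ?_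
    · rintro x ⟨β, hβ, rfl⟩
      exact le_of_eq (hval β hβ)
    · exact le_csSup hbddB ⟨_, hmem, hval _ hmem⟩
  · -- l > 0
    have hlne : l ≠ 0 := ne_of_gt hlpos
    have h0 : innerMu ξ ζ = 0 := hζperp ξ hξS
    have hmΦ : Measurable (fun q : E d × E d × E d => (q.1, q.2.1, l • q.2.2)) := by fun_prop
    have hmΨ : Measurable (fun q : E d × E d × E d => (q.1, q.2.1, l⁻¹ • q.2.2)) := by fun_prop
    have hginv : Measurable (fun p : E d × E d => (p.1, l⁻¹ • p.2)) := by fun_prop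
    have hΦmem : ∀ α ∈ GammaMu ξ ζ,
        α.map (fun q => (q.1, q.2.1, l • q.2.2)) ∈ GammaMu ξ (smulField l ζ) := by
      intro α hα
      haveI := hα.1
      refine ⟨Measure.isProbabilityMeasure_map hmΦ.aemeasurable, ?_, ?_⟩
      · rw [Measure.map_map hm1 hmΦ]
        exact hα.2.1
      · rw [Measure.map_map hm2 hmΦ, smulField, ← hα.2.2, Measure.map_map hg hm2]
        rfl
    have hΨmem : ∀ β ∈ GammaMu ξ (smulField l ζ),
        β.map (fun q => (q.1, q.2.1, l⁻¹ • q.2.2)) ∈ GammaMu ξ ζ := by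
      intro β hβ
      haveI := hβ.1
      refine ⟨Measure.isProbabilityMeasure_map hmΨ.aemeasurable, ?_, ?_⟩
      · rw [Measure.map_map hm1 hmΨ]
        exact hβ.2.1
      · rw [Measure.map_map hm2 hmΨ,
          show ((fun q : E d × E d × E d => (q.1, q.2.2))
            ∘ (fun q : E d × E d × E d => (q.1, q.2.1, l⁻¹ • q.2.2)))
            = ((fun p : E d × E d => (p.1, l⁻¹ • p.2))
              ∘ fun q : E d × E d × E d => (q.1, q.2.2)) from rfl,
          ← Measure.map_map hginv hm2, hβ.2.2, smulField, Measure.map_map hginv hg]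
        have he : ((fun p : E d × E d => (p.1, l⁻¹ • p.2))
            ∘ (fun p : E d × E d => (p.1, l • p.2))) = id := by
          funext p
          simp [smul_smul, inv_mul_cancel₀ hlne]
        rw [he, Measure.map_id]
    have hvalΦ : ∀ α : Measure (E d × E d × E d),
        ∫ q, (inner ℝ q.2.1 q.2.2 : ℝ) ∂(α.map (fun q => (q.1, q.2.1, l • q.2.2)))
          = l * ∫ q, (inner ℝ q.2.1 q.2.2 : ℝ) ∂α := by
      intro α
      rw [integral_map hmΦ.aemeasurable hcinn.aestronglyMeasurable]
      have hpt : ∀ q : E d × E d × E d,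
          (inner ℝ (q.1, q.2.1, l • q.2.2).2.1 (q.1, q.2.1, l • q.2.2).2.2 : ℝ)
            = l * inner ℝ q.2.1 q.2.2 := fun q => real_inner_smul_right _ _ _
      rw [integral_congr_ae (Eventually.of_forall hpt), integral_const_mul]
    have hvalΨ : ∀ β : Measure (E d × E d × E d),
        ∫ q, (inner ℝ q.2.1 q.2.2 : ℝ) ∂(β.map (fun q => (q.1, q.2.1, l⁻¹ • q.2.2)))
          = l⁻¹ * ∫ q, (inner ℝ q.2.1 q.2.2 : ℝ) ∂β := by
      intro β
      rw [integral_map hmΨ.aemeasurable hcinn.aestronglyMeasurable]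
      have hpt : ∀ q : E d × E d × E d,
          (inner ℝ (q.1, q.2.1, l⁻¹ • q.2.2).2.1 (q.1, q.2.1, l⁻¹ • q.2.2).2.2 : ℝ)
            = l⁻¹ * inner ℝ q.2.1 q.2.2 := fun q => real_inner_smul_right _ _ _
      rw [integral_congr_ae (Eventually.of_forall hpt), integral_const_mul]
    rcases (GammaMu ξ ζ).eq_empty_or_nonempty with hE | hne
    · have hBE : GammaMu ξ (smulField l ζ) = ∅ := by
        rw [eq_empty_iff_forall_notMem]
        intro β hβ
        exact absurd (hΨmem β hβ) (by rw [hE]; exact notMem_empty _)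
      show sSup _ = 0
      rw [hBE, image_empty, Real.sSup_empty]
    · obtain ⟨α₀, hα₀⟩ := hne
      refine le_antisymm (Real.sSup_le ?_ le_rfl) (le_of_forall_lt fun c hc => ?_)
      · rintro x ⟨β, hβ, rfl⟩
        have h1 := hvalΨ β
        have h2 := pval_nonpos hξMF hζMF h0 (hΨmem β hβ)
        rw [h1] at h2
        have h4 : l⁻¹ * ∫ q, (inner ℝ q.2.1 q.2.2 : ℝ) ∂β ≤ l⁻¹ * 0 := by
          rw [mul_zero]; exact h2
        exact (mul_le_mul_iff_right₀ (inv_pos.mpr hlpos)).mp h4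
      · have hAne : ((fun α => ∫ q, (inner ℝ q.2.1 q.2.2 : ℝ) ∂α) '' GammaMu ξ ζ).Nonempty :=
          ⟨_, mem_image_of_mem _ hα₀⟩
        have hneg : l⁻¹ * c < 0 := mul_neg_of_pos_of_neg (inv_pos.mpr hlpos) hc
        have hlt : l⁻¹ * c < sSup ((fun α => ∫ q, (inner ℝ q.2.1 q.2.2 : ℝ) ∂α) '' GammaMu ξ ζ) :=
          lt_of_lt_of_eq hneg h0.symm
        obtain ⟨x, hxmem, hxc⟩ := exists_lt_of_lt_csSup hAne hlt
        obtain ⟨α, hα, rfl⟩ := hxmem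
        calc c = l * (l⁻¹ * c) := by field_simp
          _ < l * ∫ q, (inner ℝ q.2.1 q.2.2 : ℝ) ∂α := by
              exact mul_lt_mul_of_pos_left hxc hlpos
          _ = ∫ q, (inner ℝ q.2.1 q.2.2 : ℝ) ∂(α.map (fun q => (q.1, q.2.1, l • q.2.2))) :=
              (hvalΦ α).symm
          _ ≤ sSup ((fun α => ∫ q, (inner ℝ q.2.1 q.2.2 : ℝ) ∂α) '' GammaMu ξ (smulField l ζ)) :=
              le_csSup hbddB (mem_image_of_mem _ (hΦmem α hα))

end MainParts

section HConv

open ProbabilityTheory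

set_option maxHeartbeats 2000000 in
lemma perp0_horizConvex {μ : Measure (E d)} {S : Set (Measure (E d × E d))}
    (hSsub : S ⊆ {ξ | IsMF μ ξ ∧ IsCentred ξ})
    {l : ℝ} (hl : l ∈ Icc (0:ℝ) 1) {ζ ζ' : Measure (E d × E d)}
    (hζ : ζ ∈ perp0 μ S) (hζ' : ζ' ∈ perp0 μ S)
    {α : Measure (E d × E d × E d)} (hα : α ∈ GammaMu ζ ζ') :
    α.map (fun q => (q.1, (1 - l) • q.2.1 + l • q.2.2)) ∈ perp0 μ S := by
  obtain ⟨hζMF, hζC, hζperp⟩ := hζ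
  obtain ⟨hζ'MF, hζ'C, hζ'perp⟩ := hζ'
  haveI := hα.1
  haveI := hζMF.1
  haveI := hζ'MF.1
  set g : E d × E d × E d → E d × E d := fun q => (q.1, (1 - l) • q.2.1 + l • q.2.2) with hgdef
  have hgm : Measurable g := by fun_prop
  have hm1 : Measurable (fun q : E d × E d × E d => (q.1, q.2.1)) := by fun_prop
  have hm2 : Measurable (fun q : E d × E d × E d => (q.1, q.2.2)) := by fun_prop
  have hcsq1 : Continuous (fun p : E d × E d => ‖p.1‖ ^ 2) := by fun_prop
  have hcsq : Continuous (fun p : E d × E d => ‖p.2‖ ^ 2) := by fun_prop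
  have hcinn : Continuous (fun q : E d × E d × E d => (inner ℝ q.2.1 q.2.2 : ℝ)) :=
    continuous_snd.fst.inner continuous_snd.snd
  have Iv : Integrable (fun q : E d × E d × E d => ‖q.2.1‖ ^ 2) α :=
    integrable_marg hm1 hα.2.1 hcsq.aestronglyMeasurable hζMF.m2
  have Iw : Integrable (fun q : E d × E d × E d => ‖q.2.2‖ ^ 2) α :=
    integrable_marg hm2 hα.2.2 hcsq.aestronglyMeasurable hζ'MF.m2
  have Ix : Integrable (fun q : E d × E d × E d => ‖q.1‖ ^ 2) α :=
    integrable_marg hm1 hα.2.1 hcsq1.aestronglyMeasurable hζMF.m1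
  have hnorm_le : ∀ q : E d × E d × E d,
      ‖(1 - l) • q.2.1 + l • q.2.2‖ ≤ ‖q.2.1‖ + ‖q.2.2‖ := by
    intro q
    refine (norm_add_le _ _).trans ?_
    rw [norm_smul, norm_smul, Real.norm_eq_abs, Real.norm_eq_abs,
      abs_of_nonneg (by linarith [hl.2] : (0:ℝ) ≤ 1 - l), abs_of_nonneg hl.1]
    nlinarith [norm_nonneg q.2.1, norm_nonneg q.2.2, hl.1, hl.2]
  have hMF : IsMF μ (α.map g) := by
    refine ⟨Measure.isProbabilityMeasure_map hgm.aemeasurable, ?_, ?_⟩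
    · have hcont : Continuous (fun p : E d × E d => ‖p.1‖ ^ 2 + ‖p.2‖ ^ 2) := by fun_prop
      refine (integrable_map_measure hcont.aestronglyMeasurable hgm.aemeasurable).mpr ?_
      have hgc : Continuous g := by rw [hgdef]; fun_prop
      have hcont2 : Continuous (fun q : E d × E d × E d => ‖(g q).1‖ ^ 2 + ‖(g q).2‖ ^ 2) :=
        hcont.comp hgc
      refine ((Ix.add ((Iv.add Iw).const_mul 2))).mono' hcont2.aestronglyMeasurable
        (Eventually.of_forall fun q => ?_)
      simp only [Function.comp, Real.norm_eq_abs, Pi.add_apply]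
      rw [abs_of_nonneg (by positivity)]
      have h1 := hnorm_le q
      have h2 : ‖(1 - l) • q.2.1 + l • q.2.2‖ ^ 2 ≤ (‖q.2.1‖ + ‖q.2.2‖) ^ 2 :=
        pow_le_pow_left₀ (norm_nonneg _) h1 2
      nlinarith [sq_nonneg (‖q.2.1‖ - ‖q.2.2‖)]
    · rw [Measure.map_map measurable_fst hgm]
      have he : (Prod.fst ∘ g) = (Prod.fst ∘ fun q : E d × E d × E d => (q.1, q.2.1)) := rfl
      rw [he, ← Measure.map_map measurable_fst hm1, hα.2.1]
      exact hζMF.2.2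
  have hC : IsCentred (α.map g) := by
    intro f
    have hcinnf : Continuous (fun p : E d × E d => (inner ℝ (f p.1) p.2 : ℝ)) :=
      (f.continuous.comp continuous_fst).inner continuous_snd
    rw [integral_map hgm.aemeasurable hcinnf.aestronglyMeasurable]
    have hc1 : Continuous (fun q : E d × E d × E d => (inner ℝ (f q.1) q.2.1 : ℝ)) :=
      (f.continuous.comp continuous_fst).inner continuous_snd.fst
    have hc2 : Continuous (fun q : E d × E d × E d => (inner ℝ (f q.1) q.2.2 : ℝ)) :=
      (f.continuous.comp continuous_fst).inner continuous_snd.snd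
    have hI1 : Integrable (fun q : E d × E d × E d => (inner ℝ (f q.1) q.2.1 : ℝ)) α :=
      integrable_bcf_inner f hc1.aestronglyMeasurable Iv
    have hI2 : Integrable (fun q : E d × E d × E d => (inner ℝ (f q.1) q.2.2 : ℝ)) α :=
      integrable_bcf_inner f hc2.aestronglyMeasurable Iw
    have hpt : ∀ q : E d × E d × E d, (inner ℝ (f (g q).1) (g q).2 : ℝ)
        = (1 - l) * inner ℝ (f q.1) q.2.1 + l * inner ℝ (f q.1) q.2.2 := by
      intro q
      show (inner ℝ (f q.1) ((1 - l) • q.2.1 + l • q.2.2) : ℝ) = _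
      rw [inner_add_right, real_inner_smul_right, real_inner_smul_right]
    have hz1 : ∫ q, (inner ℝ (f q.1) q.2.1 : ℝ) ∂α = 0 :=
      (integral_marg hm1 hα.2.1 hcinnf.aestronglyMeasurable).symm.trans (hζC f)
    have hz2 : ∫ q, (inner ℝ (f q.1) q.2.2 : ℝ) ∂α = 0 :=
      (integral_marg hm2 hα.2.2 hcinnf.aestronglyMeasurable).symm.trans (hζ'C f)
    calc ∫ q, (inner ℝ (f (g q).1) (g q).2 : ℝ) ∂α
        = ∫ q, ((1 - l) * inner ℝ (f q.1) q.2.1 + l * inner ℝ (f q.1) q.2.2 : ℝ) ∂α :=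
          integral_congr_ae (Eventually.of_forall hpt)
      _ = (1 - l) * ∫ q, (inner ℝ (f q.1) q.2.1 : ℝ) ∂α
            + l * ∫ q, (inner ℝ (f q.1) q.2.2 : ℝ) ∂α := by
          rw [integral_add (hI1.const_mul _) (hI2.const_mul _),
            integral_const_mul, integral_const_mul]
      _ = 0 := by rw [hz1, hz2]; ring
  refine ⟨hMF, hC, ?_⟩
  intro ξ hξS
  obtain ⟨hξMF, hξC⟩ := hSsub hξS
  haveI := hξMF.1
  have h0ζ : innerMu ξ ζ = 0 := hζperp ξ hξS
  have h0ζ' : innerMu ξ ζ' = 0 := hζ'perp ξ hξS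
  have hbddB := bddAbove_pval hξMF hMF
  refine le_antisymm (Real.sSup_le ?_ le_rfl) ?_
  · rintro x ⟨β, hβ, rfl⟩
    haveI := hβ.1
    show ∫ q, (inner ℝ q.2.1 q.2.2 : ℝ) ∂β ≤ 0
    set P : Measure ((E d × E d) × E d) := β.map (fun q => ((q.1, q.2.2), q.2.1)) with hP
    haveI : IsProbabilityMeasure P := Measure.isProbabilityMeasure_map (by fun_prop)
    have hPfst : α.map g = P.map Prod.fst := by
      rw [hP, Measure.map_map measurable_fst (by fun_prop)]
      exact hβ.2.2.symm
    obtain ⟨R, hRprob, hR1, hR2⟩ := glue P α hgm hPfst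
    haveI := hRprob
    have hRu : R.map (fun r : (E d × E d × E d) × E d => (r.1.1, r.2)) = ξ := by
      have h1 : R.map (fun r : (E d × E d × E d) × E d => (r.1.1, r.2))
          = P.map (fun p => (p.1.1, p.2)) := by
        rw [← hR2, Measure.map_map (by fun_prop) (by fun_prop)]
        rfl
      rw [h1, hP, Measure.map_map (by fun_prop) (by fun_prop)]
      exact hβ.2.1
    have hRv : R.map (fun r : (E d × E d × E d) × E d => (r.1.1, r.1.2.1)) = ζ := by
      rw [show (fun r : (E d × E d × E d) × E d => (r.1.1, r.1.2.1))
          = (fun q : E d × E d × E d => (q.1, q.2.1)) ∘ Prod.fst from rfl,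
        ← Measure.map_map hm1 measurable_fst, hR1]
      exact hα.2.1
    have hRw : R.map (fun r : (E d × E d × E d) × E d => (r.1.1, r.1.2.2)) = ζ' := by
      rw [show (fun r : (E d × E d × E d) × E d => (r.1.1, r.1.2.2))
          = (fun q : E d × E d × E d => (q.1, q.2.2)) ∘ Prod.fst from rfl,
        ← Measure.map_map hm2 measurable_fst, hR1]
      exact hα.2.2
    have hβζ : R.map (fun r : (E d × E d × E d) × E d => (r.1.1, r.2, r.1.2.1))
        ∈ GammaMu ξ ζ := by
      refine ⟨Measure.isProbabilityMeasure_map (by fun_prop), ?_, ?_⟩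
      · rw [Measure.map_map hm1 (by fun_prop)]; exact hRu
      · rw [Measure.map_map hm2 (by fun_prop)]; exact hRv
    have hβζ' : R.map (fun r : (E d × E d × E d) × E d => (r.1.1, r.2, r.1.2.2))
        ∈ GammaMu ξ ζ' := by
      refine ⟨Measure.isProbabilityMeasure_map (by fun_prop), ?_, ?_⟩
      · rw [Measure.map_map hm1 (by fun_prop)]; exact hRu
      · rw [Measure.map_map hm2 (by fun_prop)]; exact hRw
    have hcP : Continuous (fun p : (E d × E d) × E d => (inner ℝ p.2 p.1.2 : ℝ)) :=
      continuous_snd.inner continuous_fst.snd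
    have hval1 : ∫ q, (inner ℝ q.2.1 q.2.2 : ℝ) ∂β
        = ∫ (r : (E d × E d × E d) × E d),
            (inner ℝ r.2 ((1 - l) • r.1.2.1 + l • r.1.2.2) : ℝ) ∂ R := by
      have e1 : ∫ p, (inner ℝ p.2 p.1.2 : ℝ) ∂P = ∫ q, (inner ℝ q.2.1 q.2.2 : ℝ) ∂β := by
        rw [hP]
        exact integral_map (by fun_prop) hcP.aestronglyMeasurable
      have e2 : ∫ p, (inner ℝ p.2 p.1.2 : ℝ) ∂P
          = ∫ (r : (E d × E d × E d) × E d),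
              (inner ℝ r.2 ((1 - l) • r.1.2.1 + l • r.1.2.2) : ℝ) ∂ R := by
        rw [← hR2]
        exact integral_map (by fun_prop) hcP.aestronglyMeasurable
      rw [← e1, e2]
    have Iu2R : Integrable (fun r : (E d × E d × E d) × E d => ‖r.2‖ ^ 2) R :=
      integrable_marg (by fun_prop) hRu hcsq.aestronglyMeasurable hξMF.m2
    have Iv2R : Integrable (fun r : (E d × E d × E d) × E d => ‖r.1.2.1‖ ^ 2) R :=
      integrable_marg (by fun_prop) hRv hcsq.aestronglyMeasurable hζMF.m2
    have Iw2R : Integrable (fun r : (E d × E d × E d) × E d => ‖r.1.2.2‖ ^ 2) R :=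
      integrable_marg (by fun_prop) hRw hcsq.aestronglyMeasurable hζ'MF.m2
    have hcv : Continuous (fun r : (E d × E d × E d) × E d => (inner ℝ r.2 r.1.2.1 : ℝ)) :=
      continuous_snd.inner continuous_fst.snd.fst
    have hcw : Continuous (fun r : (E d × E d × E d) × E d => (inner ℝ r.2 r.1.2.2 : ℝ)) :=
      continuous_snd.inner continuous_fst.snd.snd
    have hsmv : AEStronglyMeasurable
        (fun r : (E d × E d × E d) × E d => (inner ℝ r.2 r.1.2.1 : ℝ)) R :=
      hcv.aestronglyMeasurable
    have hsmw : AEStronglyMeasurable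
        (fun r : (E d × E d × E d) × E d => (inner ℝ r.2 r.1.2.2 : ℝ)) R :=
      hcw.aestronglyMeasurable
    have hIuv : Integrable (fun r : (E d × E d × E d) × E d => (inner ℝ r.2 r.1.2.1 : ℝ)) R :=
      integrable_inner_of_sq hsmv Iu2R Iv2R
    have hIuw : Integrable (fun r : (E d × E d × E d) × E d => (inner ℝ r.2 r.1.2.2 : ℝ)) R :=
      integrable_inner_of_sq hsmw Iu2R Iw2R
    have hpt : ∀ r : (E d × E d × E d) × E d,
        (inner ℝ r.2 ((1 - l) • r.1.2.1 + l • r.1.2.2) : ℝ)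
          = (1 - l) * inner ℝ r.2 r.1.2.1 + l * inner ℝ r.2 r.1.2.2 := by
      intro r
      rw [inner_add_right, real_inner_smul_right, real_inner_smul_right]
    have hval2 : ∫ q, (inner ℝ q.2.1 q.2.2 : ℝ) ∂β
        = (1 - l) * ∫ (r : (E d × E d × E d) × E d), (inner ℝ r.2 r.1.2.1 : ℝ) ∂ R
          + l * ∫ (r : (E d × E d × E d) × E d), (inner ℝ r.2 r.1.2.2 : ℝ) ∂ R := by
      rw [hval1, integral_congr_ae (Eventually.of_forall hpt),
        integral_add (hIuv.const_mul _) (hIuw.const_mul _),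
        integral_const_mul, integral_const_mul]
    have hmp1 : Measurable (fun r : (E d × E d × E d) × E d => (r.1.1, r.2, r.1.2.1)) := by
      fun_prop
    have hmp2 : Measurable (fun r : (E d × E d × E d) × E d => (r.1.1, r.2, r.1.2.2)) := by
      fun_prop
    have hle1 : ∫ (r : (E d × E d × E d) × E d), (inner ℝ r.2 r.1.2.1 : ℝ) ∂ R ≤ 0 := by
      have hsm1 : AEStronglyMeasurable (fun q : E d × E d × E d => (inner ℝ q.2.1 q.2.2 : ℝ))
          (R.map (fun r : (E d × E d × E d) × E d => (r.1.1, r.2, r.1.2.1))) :=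
        hcinn.aestronglyMeasurable
      have hv1 : ∫ (r : (E d × E d × E d) × E d), (inner ℝ r.2 r.1.2.1 : ℝ) ∂ R
          = ∫ q, (inner ℝ q.2.1 q.2.2 : ℝ)
              ∂(R.map (fun r : (E d × E d × E d) × E d => (r.1.1, r.2, r.1.2.1))) :=
        (integral_map hmp1.aemeasurable hsm1).symm
      rw [hv1]
      exact pval_nonpos hξMF hζMF h0ζ hβζ
    have hle2 : ∫ (r : (E d × E d × E d) × E d), (inner ℝ r.2 r.1.2.2 : ℝ) ∂ R ≤ 0 := by
      have hsm2 : AEStronglyMeasurable (fun q : E d × E d × E d => (inner ℝ q.2.1 q.2.2 : ℝ))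
          (R.map (fun r : (E d × E d × E d) × E d => (r.1.1, r.2, r.1.2.2))) :=
        hcinn.aestronglyMeasurable
      have hv2 : ∫ (r : (E d × E d × E d) × E d), (inner ℝ r.2 r.1.2.2 : ℝ) ∂ R
          = ∫ q, (inner ℝ q.2.1 q.2.2 : ℝ)
              ∂(R.map (fun r : (E d × E d × E d) × E d => (r.1.1, r.2, r.1.2.2))) :=
        (integral_map hmp2.aemeasurable hsm2).symm
      rw [hv2]
      exact pval_nonpos hξMF hζ'MF h0ζ' hβζ'
    rw [hval2]
    have h1l : (0:ℝ) ≤ 1 - l := by linarith [hl.2]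
    have t1 : (1 - l) * ∫ (r : (E d × E d × E d) × E d), (inner ℝ r.2 r.1.2.1 : ℝ) ∂ R ≤ 0 :=
      mul_nonpos_iff.mpr (Or.inl ⟨h1l, hle1⟩)
    have t2 : l * ∫ (r : (E d × E d × E d) × E d), (inner ℝ r.2 r.1.2.2 : ℝ) ∂ R ≤ 0 :=
      mul_nonpos_iff.mpr (Or.inl ⟨hl.1, hle2⟩)
    linarith
  · obtain ⟨θ, hθmem, hθval⟩ := exists_coupling_pval_zero hξMF hMF hξC
    exact le_csSup hbddB ⟨θ, hθmem, hθval⟩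

end HConv

section Closed

open ProbabilityTheory

set_option maxHeartbeats 2000000 in
lemma perp0_closed {μ : Measure (E d)} {S : Set (Measure (E d × E d))}
    (hSsub : S ⊆ {ξ | IsMF μ ξ ∧ IsCentred ξ}) : IsWmuClosed μ (perp0 μ S) := by
  intro ξ hξMF hap
  haveI := hξMF.1
  have hm1 : Measurable (fun q : E d × E d × E d => (q.1, q.2.1)) := by fun_prop
  have hm2 : Measurable (fun q : E d × E d × E d => (q.1, q.2.2)) := by fun_prop
  have hcsq : Continuous (fun p : E d × E d => ‖p.2‖ ^ 2) := by fun_prop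
  have hcinn : Continuous (fun q : E d × E d × E d => (inner ℝ q.2.1 q.2.2 : ℝ)) :=
    continuous_snd.fst.inner continuous_snd.snd
  have hcd : Continuous (fun q : E d × E d × E d => ‖q.2.1 - q.2.2‖ ^ 2) := by fun_prop
  have hex : ∀ δ : ℝ, 0 < δ → ∃ ζ, ζ ∈ perp0 μ S ∧ ∃ α ∈ GammaMu ζ ξ,
      ∫ q, ‖q.2.1 - q.2.2‖ ^ 2 ∂α ≤ δ ^ 2 ∧
      Integrable (fun q : E d × E d × E d => ‖q.2.1 - q.2.2‖ ^ 2) α := by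
    intro δ hδ
    obtain ⟨ζ, hζ, hW⟩ := hap (ENNReal.ofReal (δ ^ 2))
      (ENNReal.ofReal_pos.mpr (by positivity))
    rw [Wmu2, iInf_lt_iff] at hW
    obtain ⟨α, hW⟩ := hW
    rw [iInf_lt_iff] at hW
    obtain ⟨hαmem, hL⟩ := hW
    have hnn : 0 ≤ᵐ[α] fun q : E d × E d × E d => ‖q.2.1 - q.2.2‖ ^ 2 :=
      Eventually.of_forall fun q => by positivity
    have heq : ∫ q, ‖q.2.1 - q.2.2‖ ^ 2 ∂α
        = (∫⁻ q, ENNReal.ofReal (‖q.2.1 - q.2.2‖ ^ 2) ∂α).toReal :=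
      integral_eq_lintegral_of_nonneg_ae hnn hcd.aestronglyMeasurable
    refine ⟨ζ, hζ, α, hαmem, ?_, ?_⟩
    · rw [heq]
      exact ENNReal.toReal_le_of_le_ofReal (by positivity) hL.le
    · refine ⟨hcd.aestronglyMeasurable, ?_⟩
      rw [hasFiniteIntegral_iff_ofReal hnn]
      exact hL.trans_le le_top
  refine ⟨hξMF, ?_, ?_⟩
  · -- centredness of the limit
    intro f
    have hcinnf : Continuous (fun p : E d × E d => (inner ℝ (f p.1) p.2 : ℝ)) :=
      (f.continuous.comp continuous_fst).inner continuous_snd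
    have hc1 : Continuous (fun q : E d × E d × E d => (inner ℝ (f q.1) q.2.1 : ℝ)) :=
      (f.continuous.comp continuous_fst).inner continuous_snd.fst
    have hc2 : Continuous (fun q : E d × E d × E d => (inner ℝ (f q.1) q.2.2 : ℝ)) :=
      (f.continuous.comp continuous_fst).inner continuous_snd.snd
    have hcdiff : Continuous (fun q : E d × E d × E d =>
        (inner ℝ (f q.1) (q.2.2 - q.2.1) : ℝ)) :=
      (f.continuous.comp continuous_fst).inner (continuous_snd.snd.sub continuous_snd.fst)
    refine abs_eq_zero.mp (le_antisymm (nonpos_of_forall_le fun c hc => ?_) (abs_nonneg _))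
    set δ := c / (‖f‖ + 1) with hδdef
    have hδ : 0 < δ := div_pos hc (by positivity)
    obtain ⟨ζ, hζmem, α, hαmem, hint2, hI2⟩ := hex δ hδ
    obtain ⟨hζMF, hζC, _⟩ := hζmem
    haveI := hαmem.1
    have Iv : Integrable (fun q : E d × E d × E d => ‖q.2.1‖ ^ 2) α :=
      integrable_marg hm1 hαmem.2.1 hcsq.aestronglyMeasurable hζMF.m2
    have Iw : Integrable (fun q : E d × E d × E d => ‖q.2.2‖ ^ 2) α :=
      integrable_marg hm2 hαmem.2.2 hcsq.aestronglyMeasurable hξMF.m2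
    have hI1 : Integrable (fun q : E d × E d × E d => (inner ℝ (f q.1) q.2.1 : ℝ)) α :=
      integrable_bcf_inner f hc1.aestronglyMeasurable Iv
    have hI2' : Integrable (fun q : E d × E d × E d => (inner ℝ (f q.1) q.2.2 : ℝ)) α :=
      integrable_bcf_inner f hc2.aestronglyMeasurable Iw
    have hIdiff : Integrable (fun q : E d × E d × E d =>
        (inner ℝ (f q.1) (q.2.2 - q.2.1) : ℝ)) α :=
      (hI2'.sub hI1).congr (Eventually.of_forall fun q => (inner_sub_right _ _ _).symm)
    have hz : ∫ q, (inner ℝ (f q.1) q.2.1 : ℝ) ∂α = 0 :=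
      (integral_marg hm1 hαmem.2.1 hcinnf.aestronglyMeasurable).symm.trans (hζC f)
    have hTeq : ∫ p, (inner ℝ (f p.1) p.2 : ℝ) ∂ξ = ∫ q, (inner ℝ (f q.1) q.2.2 : ℝ) ∂α :=
      integral_marg hm2 hαmem.2.2 hcinnf.aestronglyMeasurable
    have hsplit : ∫ q, (inner ℝ (f q.1) q.2.2 : ℝ) ∂α
        = ∫ q, (inner ℝ (f q.1) (q.2.2 - q.2.1) : ℝ) ∂α
          + ∫ q, (inner ℝ (f q.1) q.2.1 : ℝ) ∂α := by
      rw [← integral_add hIdiff hI1]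
      refine integral_congr_ae (Eventually.of_forall fun q => ?_)
      show (inner ℝ (f q.1) q.2.2 : ℝ)
          = (inner ℝ (f q.1) (q.2.2 - q.2.1) : ℝ) + (inner ℝ (f q.1) q.2.1 : ℝ)
      rw [inner_sub_right]; ring
    have hb : |∫ q, (inner ℝ (f q.1) (q.2.2 - q.2.1) : ℝ) ∂α|
        ≤ ‖f‖ * (δ / 2) + ‖f‖ / (2 * δ) * ∫ q, ‖q.2.1 - q.2.2‖ ^ 2 ∂α := by
      have hgInt : Integrable (fun q : E d × E d × E d =>
          ‖f‖ * (δ / 2) + ‖f‖ / (2 * δ) * ‖q.2.1 - q.2.2‖ ^ 2) α :=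
        (integrable_const _).add (hI2.const_mul _)
      have hptb : ∀ q : E d × E d × E d, ‖(inner ℝ (f q.1) (q.2.2 - q.2.1) : ℝ)‖
          ≤ ‖f‖ * (δ / 2) + ‖f‖ / (2 * δ) * ‖q.2.1 - q.2.2‖ ^ 2 := by
        intro q
        have h1 : |(inner ℝ (f q.1) (q.2.2 - q.2.1) : ℝ)| ≤ ‖f q.1‖ * ‖q.2.2 - q.2.1‖ :=
          abs_real_inner_le_norm _ _
        have h2 : ‖f q.1‖ ≤ ‖f‖ := f.norm_coe_le_norm _
        have h3 : ‖q.2.2 - q.2.1‖ = ‖q.2.1 - q.2.2‖ := norm_sub_rev _ _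
        have h4 := am_gm_norm (x := q.2.1 - q.2.2) hδ
        have h5 : (0:ℝ) ≤ ‖q.2.2 - q.2.1‖ := norm_nonneg _
        have h6 : (0:ℝ) ≤ ‖f‖ := norm_nonneg f
        rw [Real.norm_eq_abs]
        calc |(inner ℝ (f q.1) (q.2.2 - q.2.1) : ℝ)| ≤ ‖f‖ * ‖q.2.1 - q.2.2‖ := by
              rw [← h3]; nlinarith
          _ ≤ ‖f‖ * (δ / 2 + ‖q.2.1 - q.2.2‖ ^ 2 / (2 * δ)) := by nlinarith
          _ = ‖f‖ * (δ / 2) + ‖f‖ / (2 * δ) * ‖q.2.1 - q.2.2‖ ^ 2 := by ring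
      have hni := norm_integral_le_of_norm_le hgInt (Eventually.of_forall hptb)
      rw [Real.norm_eq_abs] at hni
      refine hni.trans (le_of_eq ?_)
      rw [integral_add (integrable_const _) (hI2.const_mul _), integral_const,
        probReal_univ, one_smul, integral_const_mul]
    have hfδ : ‖f‖ * (δ / 2) + ‖f‖ / (2 * δ) * δ ^ 2 = ‖f‖ * δ := by
      field_simp; ring
    have hend : ‖f‖ * δ ≤ c := by
      rw [hδdef]
      have hpos : (0:ℝ) < ‖f‖ + 1 := by positivity
      rw [mul_comm, div_mul_eq_mul_div, div_le_iff₀ hpos]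
      nlinarith [norm_nonneg f, hc.le]
    have hcoef : (0:ℝ) ≤ ‖f‖ / (2 * δ) := by positivity
    calc |∫ p, (inner ℝ (f p.1) p.2 : ℝ) ∂ξ|
        = |∫ q, (inner ℝ (f q.1) (q.2.2 - q.2.1) : ℝ) ∂α| := by
          rw [hTeq, hsplit, hz, add_zero]
      _ ≤ ‖f‖ * (δ / 2) + ‖f‖ / (2 * δ) * ∫ q, ‖q.2.1 - q.2.2‖ ^ 2 ∂α := hb
      _ ≤ ‖f‖ * (δ / 2) + ‖f‖ / (2 * δ) * δ ^ 2 := by nlinarith [hint2]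
      _ = ‖f‖ * δ := hfδ
      _ ≤ c := hend
  · -- orthogonality of the limit
    intro ξ' hξ'S
    obtain ⟨hξ'MF, hξ'C⟩ := hSsub hξ'S
    haveI := hξ'MF.1
    have hbddB := bddAbove_pval hξ'MF hξMF
    refine le_antisymm (Real.sSup_le ?_ le_rfl) ?_
    · rintro x ⟨β, hβ, rfl⟩
      haveI := hβ.1
      show ∫ q, (inner ℝ q.2.1 q.2.2 : ℝ) ∂β ≤ 0
      refine nonpos_of_forall_le fun c hc => ?_
      set M := ∫ p, ‖p.2‖ ^ 2 ∂ξ' with hM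
      have hM0 : 0 ≤ M := integral_nonneg fun p => by positivity
      set δ := c / (M + 1) with hδdef
      have hδ : 0 < δ := div_pos hc (by positivity)
      obtain ⟨ζ, hζmem, α, hαmem, hint2, hI2⟩ := hex δ hδ
      obtain ⟨hζMF, hζC, hζperp⟩ := hζmem
      haveI := hαmem.1
      haveI := hζMF.1
      have h0 : innerMu ξ' ζ = 0 := hζperp ξ' hξ'S
      set P : Measure ((E d × E d) × E d) := β.map (fun q => ((q.1, q.2.2), q.2.1)) with hP
      haveI : IsProbabilityMeasure P := Measure.isProbabilityMeasure_map (by fun_prop)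
      have hmt : Measurable (fun q : E d × E d × E d => (q.1, q.2.2)) := hm2
      have hPfst : α.map (fun q : E d × E d × E d => (q.1, q.2.2)) = P.map Prod.fst := by
        rw [hP, Measure.map_map measurable_fst (by fun_prop)]
        exact hαmem.2.2.trans hβ.2.2.symm
      obtain ⟨R, hRprob, hR1, hR2⟩ := glue P α hmt hPfst
      haveI := hRprob
      have hRu : R.map (fun r : (E d × E d × E d) × E d => (r.1.1, r.2)) = ξ' := by
        have h1 : R.map (fun r : (E d × E d × E d) × E d => (r.1.1, r.2))
            = P.map (fun p => (p.1.1, p.2)) := by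
          rw [← hR2, Measure.map_map (by fun_prop) (by fun_prop)]
          rfl
        rw [h1, hP, Measure.map_map (by fun_prop) (by fun_prop)]
        exact hβ.2.1
      have hRv : R.map (fun r : (E d × E d × E d) × E d => (r.1.1, r.1.2.1)) = ζ := by
        rw [show (fun r : (E d × E d × E d) × E d => (r.1.1, r.1.2.1))
            = (fun q : E d × E d × E d => (q.1, q.2.1)) ∘ Prod.fst from rfl,
          ← Measure.map_map hm1 measurable_fst, hR1]
        exact hαmem.2.1
      have hβζ : R.map (fun r : (E d × E d × E d) × E d => (r.1.1, r.2, r.1.2.1))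
          ∈ GammaMu ξ' ζ := by
        refine ⟨Measure.isProbabilityMeasure_map (by fun_prop), ?_, ?_⟩
        · rw [Measure.map_map hm1 (by fun_prop)]; exact hRu
        · rw [Measure.map_map hm2 (by fun_prop)]; exact hRv
      have hcP : Continuous (fun p : (E d × E d) × E d => (inner ℝ p.2 p.1.2 : ℝ)) :=
        continuous_snd.inner continuous_fst.snd
      have hval1 : ∫ q, (inner ℝ q.2.1 q.2.2 : ℝ) ∂β
          = ∫ (r : (E d × E d × E d) × E d), (inner ℝ r.2 r.1.2.2 : ℝ) ∂ R := by
        have e1 : ∫ p, (inner ℝ p.2 p.1.2 : ℝ) ∂P = ∫ q, (inner ℝ q.2.1 q.2.2 : ℝ) ∂β := by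
          rw [hP]
          exact integral_map (by fun_prop) hcP.aestronglyMeasurable
        have e2 : ∫ p, (inner ℝ p.2 p.1.2 : ℝ) ∂P
            = ∫ (r : (E d × E d × E d) × E d), (inner ℝ r.2 r.1.2.2 : ℝ) ∂ R := by
          rw [← hR2]
          exact integral_map (by fun_prop) hcP.aestronglyMeasurable
        rw [← e1, e2]
      have Iu2R : Integrable (fun r : (E d × E d × E d) × E d => ‖r.2‖ ^ 2) R :=
        integrable_marg (by fun_prop) hRu hcsq.aestronglyMeasurable hξ'MF.m2
      have Iv2R : Integrable (fun r : (E d × E d × E d) × E d => ‖r.1.2.1‖ ^ 2) R :=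
        integrable_marg (by fun_prop) hRv hcsq.aestronglyMeasurable hζMF.m2
      have Id2R : Integrable (fun r : (E d × E d × E d) × E d =>
          ‖r.1.2.1 - r.1.2.2‖ ^ 2) R :=
        integrable_marg measurable_fst hR1 hcd.aestronglyMeasurable hI2
      have hcv : Continuous (fun r : (E d × E d × E d) × E d => (inner ℝ r.2 r.1.2.1 : ℝ)) :=
        continuous_snd.inner continuous_fst.snd.fst
      have hsmv : AEStronglyMeasurable
          (fun r : (E d × E d × E d) × E d => (inner ℝ r.2 r.1.2.1 : ℝ)) R :=
        hcv.aestronglyMeasurable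
      have hIuv : Integrable (fun r : (E d × E d × E d) × E d => (inner ℝ r.2 r.1.2.1 : ℝ)) R :=
        integrable_inner_of_sq hsmv Iu2R Iv2R
      have hcdm : Continuous (fun r : (E d × E d × E d) × E d =>
          (inner ℝ r.2 (r.1.2.2 - r.1.2.1) : ℝ)) :=
        continuous_snd.inner (continuous_fst.snd.snd.sub continuous_fst.snd.fst)
      have hsmd : AEStronglyMeasurable (fun r : (E d × E d × E d) × E d =>
          (inner ℝ r.2 (r.1.2.2 - r.1.2.1) : ℝ)) R := hcdm.aestronglyMeasurable
      have hptb : ∀ r : (E d × E d × E d) × E d, (inner ℝ r.2 (r.1.2.2 - r.1.2.1) : ℝ)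
          ≤ δ / 2 * ‖r.2‖ ^ 2 + 1 / (2 * δ) * ‖r.1.2.1 - r.1.2.2‖ ^ 2 := by
        intro r
        have h1 : (inner ℝ r.2 (r.1.2.2 - r.1.2.1) : ℝ) ≤ ‖r.2‖ * ‖r.1.2.2 - r.1.2.1‖ :=
          real_inner_le_norm _ _
        have h3 : ‖r.1.2.2 - r.1.2.1‖ = ‖r.1.2.1 - r.1.2.2‖ := norm_sub_rev _ _
        have h4 := am_gm2 (a := ‖r.2‖) (b := ‖r.1.2.1 - r.1.2.2‖) hδ
        calc (inner ℝ r.2 (r.1.2.2 - r.1.2.1) : ℝ)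
            ≤ ‖r.2‖ * ‖r.1.2.1 - r.1.2.2‖ := by rw [← h3]; exact h1
          _ ≤ δ / 2 * ‖r.2‖ ^ 2 + ‖r.1.2.1 - r.1.2.2‖ ^ 2 / (2 * δ) := h4
          _ = δ / 2 * ‖r.2‖ ^ 2 + 1 / (2 * δ) * ‖r.1.2.1 - r.1.2.2‖ ^ 2 := by ring
      have hIud : Integrable (fun r : (E d × E d × E d) × E d =>
          (inner ℝ r.2 (r.1.2.2 - r.1.2.1) : ℝ)) R := by
        refine ((Iu2R.const_mul (δ / 2)).add (Id2R.const_mul (1 / (2 * δ)))).mono' hsmd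
          (Eventually.of_forall fun r => ?_)
        have h1 : |(inner ℝ r.2 (r.1.2.2 - r.1.2.1) : ℝ)| ≤ ‖r.2‖ * ‖r.1.2.2 - r.1.2.1‖ :=
          abs_real_inner_le_norm _ _
        have h3 : ‖r.1.2.2 - r.1.2.1‖ = ‖r.1.2.1 - r.1.2.2‖ := norm_sub_rev _ _
        have h4 := am_gm2 (a := ‖r.2‖) (b := ‖r.1.2.1 - r.1.2.2‖) hδ
        rw [Real.norm_eq_abs]
        calc |(inner ℝ r.2 (r.1.2.2 - r.1.2.1) : ℝ)|
            ≤ ‖r.2‖ * ‖r.1.2.1 - r.1.2.2‖ := by rw [← h3]; exact h1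
          _ ≤ δ / 2 * ‖r.2‖ ^ 2 + ‖r.1.2.1 - r.1.2.2‖ ^ 2 / (2 * δ) := h4
          _ = δ / 2 * ‖r.2‖ ^ 2 + 1 / (2 * δ) * ‖r.1.2.1 - r.1.2.2‖ ^ 2 := by ring
      have hsplit : ∫ (r : (E d × E d × E d) × E d), (inner ℝ r.2 r.1.2.2 : ℝ) ∂ R
          = ∫ (r : (E d × E d × E d) × E d), (inner ℝ r.2 r.1.2.1 : ℝ) ∂ R
            + ∫ (r : (E d × E d × E d) × E d), (inner ℝ r.2 (r.1.2.2 - r.1.2.1) : ℝ) ∂ R := by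
        rw [← integral_add hIuv hIud]
        refine integral_congr_ae (Eventually.of_forall fun r => ?_)
        show (inner ℝ r.2 r.1.2.2 : ℝ)
            = (inner ℝ r.2 r.1.2.1 : ℝ) + (inner ℝ r.2 (r.1.2.2 - r.1.2.1) : ℝ)
        rw [inner_sub_right]; ring
      have hmp1 : Measurable (fun r : (E d × E d × E d) × E d => (r.1.1, r.2, r.1.2.1)) := by
        fun_prop
      have hle1 : ∫ (r : (E d × E d × E d) × E d), (inner ℝ r.2 r.1.2.1 : ℝ) ∂ R ≤ 0 := by
        have hsm1 : AEStronglyMeasurable (fun q : E d × E d × E d => (inner ℝ q.2.1 q.2.2 : ℝ))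
            (R.map (fun r : (E d × E d × E d) × E d => (r.1.1, r.2, r.1.2.1))) :=
          hcinn.aestronglyMeasurable
        have hv1 : ∫ (r : (E d × E d × E d) × E d), (inner ℝ r.2 r.1.2.1 : ℝ) ∂ R
            = ∫ q, (inner ℝ q.2.1 q.2.2 : ℝ)
                ∂(R.map (fun r : (E d × E d × E d) × E d => (r.1.1, r.2, r.1.2.1))) :=
          (integral_map hmp1.aemeasurable hsm1).symm
        rw [hv1]
        exact pval_nonpos hξ'MF hζMF h0 hβζ
      have hM_eq : ∫ (r : (E d × E d × E d) × E d), ‖r.2‖ ^ 2 ∂ R = M :=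
        (integral_marg (by fun_prop) hRu hcsq.aestronglyMeasurable).symm
      have hd_eq : ∫ (r : (E d × E d × E d) × E d), ‖r.1.2.1 - r.1.2.2‖ ^ 2 ∂ R
          = ∫ q, ‖q.2.1 - q.2.2‖ ^ 2 ∂α :=
        (integral_marg measurable_fst hR1 hcd.aestronglyMeasurable).symm
      have hle2 : ∫ (r : (E d × E d × E d) × E d), (inner ℝ r.2 (r.1.2.2 - r.1.2.1) : ℝ) ∂ R
          ≤ δ / 2 * M + 1 / (2 * δ) * δ ^ 2 := by
        have hbase : Integrable (fun r : (E d × E d × E d) × E d =>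
            δ / 2 * ‖r.2‖ ^ 2 + 1 / (2 * δ) * ‖r.1.2.1 - r.1.2.2‖ ^ 2) R :=
          (Iu2R.const_mul (δ / 2)).add (Id2R.const_mul (1 / (2 * δ)))
        have h5 := integral_mono hIud hbase hptb
        have h6 : ∫ (r : (E d × E d × E d) × E d),
            (δ / 2 * ‖r.2‖ ^ 2 + 1 / (2 * δ) * ‖r.1.2.1 - r.1.2.2‖ ^ 2) ∂ R
            = δ / 2 * M + 1 / (2 * δ) * ∫ q, ‖q.2.1 - q.2.2‖ ^ 2 ∂α := by
          rw [integral_add (Iu2R.const_mul _) (Id2R.const_mul _), integral_const_mul,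
            integral_const_mul, hM_eq, hd_eq]
        rw [h6] at h5
        have hcoef : (0:ℝ) ≤ 1 / (2 * δ) := by positivity
        nlinarith [hint2]
      have harith : δ / 2 * M + 1 / (2 * δ) * δ ^ 2 = δ * (M + 1) / 2 := by
        field_simp
      have hfinal : δ * (M + 1) / 2 ≤ c := by
        have hpos : (0:ℝ) < M + 1 := by linarith
        have hδM : δ * (M + 1) = c := by
          rw [hδdef]; field_simp
        rw [hδM]
        linarith
      rw [hval1, hsplit]
      linarith [hle1, hle2, harith, hfinal]
    · obtain ⟨θ, hθmem, hθval⟩ := exists_coupling_pval_zero hξ'MF hξMF hξ'C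
      exact le_csSup hbddB ⟨θ, hθmem, hθval⟩

end Closed

/-- the metric orthogonal complement of a W_μ-closed horizontally convex
positive cone of centred measure fields is again such a cone. -/
theorem stmt1 (d : ℕ) (hd : 1 ≤ d) (μ : Measure (E d)) (hμ : IsP2 μ)
    (S : Set (Measure (E d × E d)))
    (hSsub : S ⊆ {ξ | IsMF μ ξ ∧ IsCentred ξ})
    (hcl : IsWmuClosed μ S) (hconv : IsHorizConvex S) (hcone : IsPosCone S) :
    perp0 μ S ⊆ {ξ | IsMF μ ξ ∧ IsCentred ξ} ∧
    IsWmuClosed μ (perp0 μ S) ∧ IsHorizConvex (perp0 μ S) ∧ IsPosCone (perp0 μ S) := by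
  refine ⟨fun ζ hζ => ⟨hζ.1, hζ.2.1⟩, perp0_closed hSsub, ?_, ?_⟩
  · intro l hlmem ζ hζ ζ' hζ' α hα
    exact perp0_horizConvex hSsub hlmem hζ hζ' hα
  · intro ζ hζ l hl
    exact perp_smul hSsub hζ l hl
end
end

section
/- Let 0 ≤ k ≤ d−1 and let A = Φ(ℝ^k) ⊆ ℝ^d be a DC_k set, with Φ as in the definition of DC_k sets. Then there exist a convex function φ : ℝ^d → ℝ and d−k+1 measurable maps f_k, f_{k+1}, …, f_d : ℝ^d → ℝ^d such that f_j(x) ∈ ∂φ(x) for every x ∈ ℝ^d and every j ∈ {k, …, d}, and for every x ∈ A the vectors f_k(x), …, f_d(x) are at pairwise distance at least one. -/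
open MeasureTheory Filter Metric Set
open scoped ENNReal

noncomputable section

variable {d : ℕ}

namespace Stmt10Aux

variable {m : ℕ}

lemma convexOn_continuous {u : E m → ℝ} (hu : ConvexOn ℝ Set.univ u) : Continuous u := by
  rw [← continuousOn_univ]
  exact ConvexOn.continuousOn isOpen_univ hu

def lineF (u : E m → ℝ) (x v : E m) (t : ℝ) : ℝ := u (x + t • v)

lemma lineF_convex {u : E m → ℝ} (hu : ConvexOn ℝ Set.univ u) (x v : E m) :
    ConvexOn ℝ Set.univ (lineF u x v) := by
  have h := hu.comp_affineMap (AffineMap.lineMap x (x + v) : ℝ →ᵃ[ℝ] E m)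
  have he : (⇑(AffineMap.lineMap x (x + v) : ℝ →ᵃ[ℝ] E m)) ⁻¹' Set.univ = Set.univ := by
    simp
  rw [he] at h
  have hfe : (u ∘ ⇑(AffineMap.lineMap x (x + v) : ℝ →ᵃ[ℝ] E m)) = lineF u x v := by
    funext t
    simp only [Function.comp_apply, AffineMap.lineMap_apply, vsub_eq_sub, vadd_eq_add,
      add_sub_cancel_left, lineF]
    rw [add_comm]
  rwa [hfe] at h

def slopeD (u : E m → ℝ) (x v : E m) (t : ℝ) : ℝ := (u (x + t • v) - u x) / t

lemma lineF_zero (u : E m → ℝ) (x v : E m) : lineF u x v 0 = u x := by simp [lineF]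

lemma slopeD_eq (u : E m → ℝ) (x v : E m) (t : ℝ) :
    slopeD u x v t = (lineF u x v t - lineF u x v 0) / (t - 0) := by
  simp [slopeD, lineF]

lemma slopeD_mono {u : E m → ℝ} (hu : ConvexOn ℝ Set.univ u) (x v : E m) {s t : ℝ}
    (hs : 0 < s) (hst : s ≤ t) : slopeD u x v s ≤ slopeD u x v t := by
  have h := (lineF_convex hu x v).secant_mono (a := 0) (x := s) (y := t)
    (Set.mem_univ _) (Set.mem_univ _) (Set.mem_univ _) (ne_of_gt hs)
    (ne_of_gt (lt_of_lt_of_le hs hst)) hst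
  rw [slopeD_eq, slopeD_eq]
  exact h

lemma slopeD_lb {u : E m → ℝ} (hu : ConvexOn ℝ Set.univ u) (x v : E m) {t : ℝ} (ht : 0 < t) :
    u x - u (x - v) ≤ slopeD u x v t := by
  have h := (lineF_convex hu x v).secant_mono (a := 0) (x := -1) (y := t)
    (Set.mem_univ _) (Set.mem_univ _) (Set.mem_univ _) (by norm_num) (ne_of_gt ht)
    (by linarith)
  rw [slopeD_eq u x v t]
  have hm : lineF u x v (-1) = u (x - v) := by
    simp [lineF, sub_eq_add_neg]
  rw [hm, lineF_zero] at h
  have harith : (u (x - v) - u x) / (-1 - 0) = u x - u (x - v) := by ring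
  rw [harith] at h
  rw [lineF_zero]
  exact h

def DD (u : E m → ℝ) (x v : E m) : ℝ := ⨅ n : ℕ, slopeD u x v (1 / (n + 1))

lemma one_div_nat_pos (n : ℕ) : (0:ℝ) < 1 / ((n:ℝ) + 1) := by positivity

lemma DD_bddBelow {u : E m → ℝ} (hu : ConvexOn ℝ Set.univ u) (x v : E m) :
    BddBelow (Set.range fun n : ℕ => slopeD u x v (1 / (n + 1))) := by
  refine ⟨u x - u (x - v), ?_⟩
  rintro _ ⟨n, rfl⟩
  exact slopeD_lb hu x v (one_div_nat_pos n)

lemma DD_le_slopeD {u : E m → ℝ} (hu : ConvexOn ℝ Set.univ u) (x v : E m) {t : ℝ} (ht : 0 < t) :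
    DD u x v ≤ slopeD u x v t := by
  obtain ⟨n, hn⟩ := exists_nat_one_div_lt ht
  exact ciInf_le_of_le (DD_bddBelow hu x v) n (slopeD_mono hu x v (one_div_nat_pos n) hn.le)

lemma lb_le_DD {u : E m → ℝ} (hu : ConvexOn ℝ Set.univ u) (x v : E m) :
    u x - u (x - v) ≤ DD u x v :=
  le_ciInf fun n => slopeD_lb hu x v (one_div_nat_pos n)

lemma tendsto_slopeD_DD {u : E m → ℝ} (hu : ConvexOn ℝ Set.univ u) (x v : E m) {t : ℕ → ℝ}
    (htp : ∀ n, 0 < t n) (ht0 : Tendsto t atTop (nhds 0)) :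
    Tendsto (fun n => slopeD u x v (t n)) atTop (nhds (DD u x v)) := by
  rw [tendsto_order]
  constructor
  · intro a ha
    exact Eventually.of_forall fun n => lt_of_lt_of_le ha (DD_le_slopeD hu x v (htp n))
  · intro b hb
    obtain ⟨n₀, hn₀⟩ := exists_lt_of_ciInf_lt hb
    have hev : ∀ᶠ n in atTop, t n < 1 / ((n₀:ℝ) + 1) :=
      ht0.eventually_lt_const (one_div_nat_pos n₀)
    exact hev.mono fun n hn => lt_of_le_of_lt (slopeD_mono hu x v (htp n) hn.le) hn₀

lemma tendsto_DD_main {u : E m → ℝ} (hu : ConvexOn ℝ Set.univ u) (x v : E m) :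
    Tendsto (fun n : ℕ => slopeD u x v (1 / (n + 1))) atTop (nhds (DD u x v)) :=
  tendsto_slopeD_DD hu x v (fun n => one_div_nat_pos n) tendsto_one_div_add_atTop_nhds_zero_nat

lemma DD_combo {u : E m → ℝ} (hu : ConvexOn ℝ Set.univ u) (x v w : E m) {a b : ℝ}
    (ha : 0 < a) (hb : 0 < b) :
    DD u x (a • v + b • w) ≤ a * DD u x v + b * DD u x w := by
  have hab : 0 < a + b := by linarith
  have key : ∀ s : ℝ, 0 < s →
      slopeD u x (a • v + b • w) s ≤
        a * slopeD u x v (s * (a + b)) + b * slopeD u x w (s * (a + b)) := by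
    intro s hs
    have hsab : 0 < s * (a + b) := by positivity
    have hcc := hu.2 (Set.mem_univ (x + (s * (a + b)) • v)) (Set.mem_univ (x + (s * (a + b)) • w))
      (le_of_lt (div_pos ha hab)) (le_of_lt (div_pos hb hab)) (by field_simp)
    simp only [smul_eq_mul] at hcc
    have hpt : (a / (a + b)) • (x + (s * (a + b)) • v) + (b / (a + b)) • (x + (s * (a + b)) • w)
        = x + s • (a • v + b • w) := by
      match_scalars <;> field_simp <;> ring
    rw [hpt] at hcc
    have hccT : (a + b) * u (x + s • (a • v + b • w))
        ≤ a * u (x + (s * (a + b)) • v) + b * u (x + (s * (a + b)) • w) := by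
      have h := mul_le_mul_of_nonneg_left hcc (le_of_lt hab)
      have e : (a + b) * (a / (a + b) * u (x + (s * (a + b)) • v)
          + b / (a + b) * u (x + (s * (a + b)) • w))
          = a * u (x + (s * (a + b)) • v) + b * u (x + (s * (a + b)) • w) := by
        field_simp
      rw [e] at h; exact h
    unfold slopeD
    rw [← mul_div_assoc, ← mul_div_assoc, ← add_div, div_le_div_iff₀ hs hsab]
    nlinarith [hccT, hs]
  have h1 := tendsto_DD_main hu x (a • v + b • w)
  have h2 := tendsto_slopeD_DD hu x v (t := fun n : ℕ => (1 / ((n:ℝ) + 1)) * (a + b))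
    (fun n => by positivity)
    (by simpa using tendsto_one_div_add_atTop_nhds_zero_nat.mul_const (a + b))
  have h3 := tendsto_slopeD_DD hu x w (t := fun n : ℕ => (1 / ((n:ℝ) + 1)) * (a + b))
    (fun n => by positivity)
    (by simpa using tendsto_one_div_add_atTop_nhds_zero_nat.mul_const (a + b))
  exact le_of_tendsto_of_tendsto' h1 ((h2.const_mul a).add (h3.const_mul b))
    (fun n => key _ (one_div_nat_pos n))

lemma slopeD_smul (u : E m → ℝ) (x v : E m) {c s : ℝ} (hc : 0 < c) (hs : 0 < s) :
    slopeD u x (c • v) s = c * slopeD u x v (s * c) := by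
  unfold slopeD
  rw [smul_smul]
  field_simp

lemma DD_smul {u : E m → ℝ} (hu : ConvexOn ℝ Set.univ u) (x v : E m) {c : ℝ} (hc : 0 < c) :
    DD u x (c • v) = c * DD u x v := by
  have h1 := tendsto_DD_main hu x (c • v)
  have h2 := tendsto_slopeD_DD hu x v (t := fun n : ℕ => (1 / ((n:ℝ) + 1)) * c)
    (fun n => by positivity)
    (by simpa using tendsto_one_div_add_atTop_nhds_zero_nat.mul_const c)
  have he : (fun n : ℕ => slopeD u x (c • v) (1 / (n + 1)))
      = fun n : ℕ => c * slopeD u x v ((1 / ((n:ℝ) + 1)) * c) := by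
    funext n
    exact slopeD_smul u x v hc (one_div_nat_pos n)
  rw [he] at h1
  exact tendsto_nhds_unique h1 (h2.const_mul c)

lemma DD_zero (u : E m → ℝ) (x : E m) : DD u x 0 = 0 := by
  have : ∀ n : ℕ, slopeD u x 0 (1 / ((n:ℝ) + 1)) = 0 := by
    intro n; simp [slopeD]
  unfold DD
  simp only [this, ciInf_const]

lemma DD_lb_lin {u : E m → ℝ} (hu : ConvexOn ℝ Set.univ u) (x : E m) :
    ∃ L : ℝ, ∀ v, -(L * ‖v‖) ≤ DD u x v := by
  have hc := convexOn_continuous hu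
  obtain ⟨z, hz, hmax⟩ := (isCompact_closedBall x 1).exists_isMaxOn
    ⟨x, mem_closedBall_self zero_le_one⟩ hc.continuousOn
  refine ⟨u z - u x, fun v => ?_⟩
  rcases eq_or_ne v 0 with rfl | hv
  · simp [DD_zero]
  · have hnv : 0 < ‖v‖ := norm_pos_iff.mpr hv
    have hval : ‖v‖ • (‖v‖⁻¹ • v) = v := by
      rw [smul_smul, mul_inv_cancel₀ hnv.ne', one_smul]
    have hsm : DD u x v = ‖v‖ * DD u x (‖v‖⁻¹ • v) := by
      conv_lhs => rw [← hval]
      exact DD_smul hu x _ hnv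
    have hub : u x - u (x - ‖v‖⁻¹ • v) ≤ DD u x (‖v‖⁻¹ • v) := lb_le_DD hu x _
    have hball : x - ‖v‖⁻¹ • v ∈ closedBall x 1 := by
      rw [mem_closedBall, dist_eq_norm]
      have : ‖x - ‖v‖⁻¹ • v - x‖ = ‖v‖⁻¹ * ‖v‖ := by
        rw [sub_sub_cancel_left, norm_neg, norm_smul, norm_inv, norm_norm]
      rw [this, inv_mul_cancel₀ hnv.ne']
    have hmz : u (x - ‖v‖⁻¹ • v) ≤ u z := hmax hball
    calc -((u z - u x) * ‖v‖) ≤ (u x - u (x - ‖v‖⁻¹ • v)) * ‖v‖ := by nlinarith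
      _ ≤ DD u x (‖v‖⁻¹ • v) * ‖v‖ := by nlinarith
      _ = DD u x v := by rw [hsm]; ring

lemma DD_measurable {u : E m → ℝ} (hu : ConvexOn ℝ Set.univ u) (v : E m) :
    Measurable fun x => DD u x v := by
  have hc := convexOn_continuous hu
  apply measurable_of_tendsto_metrizable
    (f := fun (n : ℕ) (x : E m) => slopeD u x v (1 / ((n:ℝ) + 1)))
  · intro n
    exact (((hc.comp (continuous_id.add continuous_const)).sub hc).div_const _).measurable
  · rw [tendsto_pi_nhds]
    intro x
    exact tendsto_DD_main hu x v

lemma DD_convexOn {u : E m → ℝ} (hu : ConvexOn ℝ Set.univ u) (x : E m) :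
    ConvexOn ℝ Set.univ (fun v => DD u x v) := by
  refine ⟨convex_univ, fun v _ w _ a b ha hb hab => ?_⟩
  rcases eq_or_lt_of_le ha with rfl | ha'
  · have hb1 : b = 1 := by linarith
    subst hb1; simp
  rcases eq_or_lt_of_le hb with rfl | hb'
  · have ha1 : a = 1 := by linarith
    subst ha1; simp
  · exact DD_combo hu x v w ha' hb'

lemma DD_contv {u : E m → ℝ} (hu : ConvexOn ℝ Set.univ u) (x : E m) :
    Continuous (fun v => DD u x v) :=
  convexOn_continuous (DD_convexOn hu x)

def VV (u : E m → ℝ) (x v : E m) : ℝ := ‖v‖ ^ 2 / 2 + DD u x v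

lemma VV_cont {u : E m → ℝ} (hu : ConvexOn ℝ Set.univ u) (x : E m) : Continuous (VV u x) :=
  ((continuous_norm.pow 2).div_const 2).add (DD_contv hu x)

lemma VV_meas {u : E m → ℝ} (hu : ConvexOn ℝ Set.univ u) (v : E m) :
    Measurable fun x => VV u x v :=
  measurable_const.add (DD_measurable hu v)

lemma VV_bdd {u : E m → ℝ} (hu : ConvexOn ℝ Set.univ u) (x : E m) :
    ∃ L : ℝ, ∀ v, -(L ^ 2 / 2) ≤ VV u x v := by
  obtain ⟨L, hL⟩ := DD_lb_lin hu x
  refine ⟨L, fun v => ?_⟩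
  have := hL v
  unfold VV
  nlinarith [sq_nonneg (‖v‖ - L)]

def rSeq (m : ℕ) : ℕ → E m := TopologicalSpace.denseSeq (E m)

def mI (u : E m → ℝ) (x : E m) : ℝ := ⨅ n : ℕ, VV u x (rSeq m n)

lemma mI_bddBelow {u : E m → ℝ} (hu : ConvexOn ℝ Set.univ u) (x : E m) :
    BddBelow (Set.range fun n : ℕ => VV u x (rSeq m n)) := by
  obtain ⟨L, hL⟩ := VV_bdd hu x
  exact ⟨-(L ^ 2 / 2), by rintro _ ⟨n, rfl⟩; exact hL _⟩

lemma mI_le {u : E m → ℝ} (hu : ConvexOn ℝ Set.univ u) (x v : E m) : mI u x ≤ VV u x v := by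
  refine le_of_forall_pos_lt_add fun ε hε => ?_
  have hop : IsOpen {w : E m | VV u x w < VV u x v + ε} := isOpen_lt (VV_cont hu x) continuous_const
  have hne : {w : E m | VV u x w < VV u x v + ε}.Nonempty := ⟨v, by simp; linarith⟩
  obtain ⟨n, hn⟩ := (TopologicalSpace.denseRange_denseSeq (E m)).exists_mem_open hop hne
  exact lt_of_le_of_lt (ciInf_le (mI_bddBelow hu x) n) hn

lemma mI_measurable {u : E m → ℝ} (hu : ConvexOn ℝ Set.univ u) : Measurable (mI u) := by
  set F : ℕ → E m → ℝ := fun n x =>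
    (Finset.range (n + 1)).inf' ⟨0, by simp⟩ (fun i => VV u x (rSeq m i)) with hFdef
  have hF : ∀ n : ℕ, Measurable (F n) := by
    intro n
    induction n with
    | zero => simpa [hFdef] using VV_meas hu (rSeq m 0)
    | succ n ih =>
        have he : F (n + 1) = fun x => min (VV u x (rSeq m (n + 1))) (F n x) := by
          funext x
          apply le_antisymm
          · apply le_min
            · exact Finset.inf'_le _ (by simp)
            · apply Finset.le_inf'
              intro b hb
              refine Finset.inf'_le _ ?_
              simp only [Finset.mem_range] at hb ⊢
              omega
          · apply Finset.le_inf'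
            intro b hb
            simp only [Finset.mem_range] at hb
            rcases Nat.lt_succ_iff_lt_or_eq.mp hb with hb' | hb'
            · exact le_trans (min_le_right _ _) (Finset.inf'_le _ (by simpa using hb'))
            · subst hb'
              exact min_le_left _ _
        rw [he]
        exact (VV_meas hu _).min ih
  apply measurable_of_tendsto_metrizable (f := F) hF
  rw [tendsto_pi_nhds]
  intro x
  have hbddF : BddBelow (Set.range fun n => F n x) := by
    obtain ⟨L, hL⟩ := VV_bdd hu x
    refine ⟨-(L ^ 2 / 2), ?_⟩
    rintro _ ⟨n, rfl⟩
    obtain ⟨i, hi, heq⟩ := Finset.exists_mem_eq_inf' (⟨0, by simp⟩ : (Finset.range (n+1)).Nonempty)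
      (fun i => VV u x (rSeq m i))
    rw [hFdef]
    simp only []
    rw [heq]
    exact hL _
  have hanti : Antitone fun n => F n x := by
    intro p q hpq
    apply Finset.le_inf'
    intro b hb
    refine Finset.inf'_le _ ?_
    simp only [Finset.mem_range] at hb ⊢
    omega
  have htd := tendsto_atTop_ciInf hanti hbddF
  have heqI : (⨅ n, F n x) = mI u x := by
    apply le_antisymm
    · refine le_ciInf fun i => ciInf_le_of_le hbddF i ?_
      exact Finset.inf'_le _ (by simp)
    · refine le_ciInf fun n => ?_
      obtain ⟨i, hi, heq⟩ := Finset.exists_mem_eq_inf'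
        (⟨0, by simp⟩ : (Finset.range (n+1)).Nonempty) (fun i => VV u x (rSeq m i))
      show mI u x ≤ (Finset.range (n+1)).inf' _ _
      rw [heq]
      exact ciInf_le (mI_bddBelow hu x) i
  rwa [heqI] at htd

lemma exists_VV_lt (u : E m → ℝ) (x : E m) (n : ℕ) :
    ∃ i : ℕ, VV u x (rSeq m i) < mI u x + 1 / ((n:ℝ) + 1) :=
  exists_lt_of_ciInf_lt (lt_add_of_pos_right _ (one_div_nat_pos n))

def NN (u : E m → ℝ) (n : ℕ) (x : E m) : ℕ := Nat.find (exists_VV_lt u x n)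

lemma NN_spec (u : E m → ℝ) (x : E m) (n : ℕ) :
    VV u x (rSeq m (NN u n x)) < mI u x + 1 / ((n:ℝ) + 1) := Nat.find_spec (exists_VV_lt u x n)

lemma NN_meas {u : E m → ℝ} (hu : ConvexOn ℝ Set.univ u) (n : ℕ) : Measurable (NN u n) := by
  apply measurable_to_countable'
  intro i
  have hset : NN u n ⁻¹' {i} =
      {x : E m | VV u x (rSeq m i) < mI u x + 1 / ((n:ℝ) + 1)} ∩
        ⋂ (j : ℕ) (_ : j < i), {x : E m | VV u x (rSeq m j) < mI u x + 1 / ((n:ℝ) + 1)}ᶜ := by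
    ext x
    simp only [Set.mem_preimage, Set.mem_singleton_iff, NN, Nat.find_eq_iff, Set.mem_inter_iff,
      Set.mem_setOf_eq, Set.mem_iInter, Set.mem_compl_iff]
  rw [hset]
  have hmeas : ∀ j : ℕ, MeasurableSet {x : E m | VV u x (rSeq m j) < mI u x + 1 / ((n:ℝ) + 1)} :=
    fun j => measurableSet_lt (VV_meas hu _) ((mI_measurable hu).add_const _)
  exact (hmeas i).inter (MeasurableSet.iInter fun j => MeasurableSet.iInter fun _ => (hmeas j).compl)

def vN (u : E m → ℝ) (n : ℕ) (x : E m) : E m := rSeq m (NN u n x)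

lemma vN_meas {u : E m → ℝ} (hu : ConvexOn ℝ Set.univ u) (n : ℕ) : Measurable (vN u n) :=
  measurable_from_top.comp (NN_meas hu n)

lemma VV_strong {u : E m → ℝ} (hu : ConvexOn ℝ Set.univ u) (x : E m) {a b : E m} {ε : ℝ}
    (hA : VV u x a ≤ mI u x + ε) (hB : VV u x b ≤ mI u x + ε) : ‖a - b‖ ^ 2 ≤ 8 * ε := by
  have hmid := mI_le hu x ((1/2 : ℝ) • a + (1/2 : ℝ) • b)
  have hDD : DD u x ((1/2:ℝ) • a + (1/2:ℝ) • b) ≤ (1/2) * DD u x a + (1/2) * DD u x b :=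
    DD_combo hu x a b (by norm_num) (by norm_num)
  have hpar := parallelogram_law_with_norm ℝ a b
  have hnorm : ‖(1/2:ℝ) • a + (1/2:ℝ) • b‖ ^ 2 = ‖a + b‖ ^ 2 / 4 := by
    rw [← smul_add, norm_smul]
    simp
    ring
  unfold VV at hmid hA hB
  rw [hnorm] at hmid
  nlinarith [hpar, hmid, hDD, hA, hB]

lemma vN_tendsto {u : E m → ℝ} (hu : ConvexOn ℝ Set.univ u) (x : E m) :
    ∃ l, Tendsto (fun n => vN u n x) atTop (nhds l) := by
  apply cauchySeq_tendsto_of_complete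
  apply cauchySeq_of_le_tendsto_0 (fun N : ℕ => Real.sqrt (8 * (1 / ((N:ℝ) + 1))))
  · intro n p N hn hp
    have hbound : ∀ q : ℕ, N ≤ q → VV u x (vN u q x) ≤ mI u x + 1 / ((N:ℝ) + 1) := by
      intro q hq
      refine le_trans (NN_spec u x q).le ?_
      have : (1:ℝ) / ((q:ℝ) + 1) ≤ 1 / ((N:ℝ) + 1) := by
        apply one_div_le_one_div_of_le
        · positivity
        · exact_mod_cast Nat.succ_le_succ hq
      linarith
    have hsq : ‖vN u n x - vN u p x‖ ^ 2 ≤ 8 * (1 / ((N:ℝ) + 1)) :=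
      VV_strong hu x (hbound n hn) (hbound p hp)
    rw [dist_eq_norm]
    exact (Real.le_sqrt (norm_nonneg _) (by positivity)).mpr hsq
  · have h0 : Tendsto (fun N : ℕ => 8 * (1 / ((N:ℝ) + 1))) atTop (nhds 0) := by
      simpa using tendsto_one_div_add_atTop_nhds_zero_nat.const_mul (8:ℝ)
    have := (Real.continuous_sqrt.tendsto 0).comp h0
    simpa only [Function.comp_def, Real.sqrt_zero] using this

theorem exists_meas_subgrad (u : E m → ℝ) (hu : ConvexOn ℝ Set.univ u) :
    ∃ g : E m → E m, Measurable g ∧ ∀ x, g x ∈ subdiff u x := by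
  choose l hl using fun x => vN_tendsto hu x
  refine ⟨fun x => -(l x), ?_, ?_⟩
  · have hml : Measurable l := by
      apply measurable_of_tendsto_metrizable (f := fun n => vN u n) (fun n => vN_meas hu n)
      rw [tendsto_pi_nhds]
      exact hl
    exact hml.neg
  · intro x
    intro y
    -- VV u x (l x) = mI u x
    have hVl : VV u x (l x) = mI u x := by
      have h1 : Tendsto (fun n => VV u x (vN u n x)) atTop (nhds (VV u x (l x))) :=
        ((VV_cont hu x).tendsto _).comp (hl x)
      have h2 : Tendsto (fun n => VV u x (vN u n x)) atTop (nhds (mI u x)) := by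
        have hup : Tendsto (fun n : ℕ => mI u x + 1 / ((n:ℝ) + 1)) atTop (nhds (mI u x)) := by
          simpa using (tendsto_const_nhds (x := mI u x) (f := atTop)).add
            tendsto_one_div_add_atTop_nhds_zero_nat
        exact tendsto_of_tendsto_of_tendsto_of_le_of_le tendsto_const_nhds hup
          (fun n => mI_le hu x _) (fun n => (NN_spec u x n).le)
      exact tendsto_nhds_unique h1 h2
    set w := y - x with hw
    have key : ∀ t : ℝ, 0 < t → 0 ≤ inner ℝ (l x) w + t / 2 * ‖w‖ ^ 2 + DD u x w := by
      intro t ht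
      have hm := mI_le hu x (l x + t • w)
      have hDDc := DD_combo hu x (l x) w one_pos ht
      rw [one_smul, one_mul] at hDDc
      have hexp : ‖l x + t • w‖ ^ 2
          = ‖l x‖ ^ 2 + 2 * (t * inner ℝ (l x) w) + t ^ 2 * ‖w‖ ^ 2 := by
        rw [norm_add_sq_real, real_inner_smul_right, norm_smul, Real.norm_eq_abs, mul_pow, sq_abs]
      unfold VV at hm hVl
      rw [hexp] at hm
      by_contra hcon
      push_neg at hcon
      have hneg : t * (inner ℝ (l x) w + t / 2 * ‖w‖ ^ 2 + DD u x w) < 0 :=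
        mul_neg_of_pos_of_neg ht hcon
      nlinarith [hm, hVl, hDDc, hneg]
    have hfin : 0 ≤ inner ℝ (l x) w + DD u x w := by
      refine le_of_forall_pos_lt_add fun ε hε => ?_
      set t : ℝ := ε / (‖w‖ ^ 2 + 1) with htdef
      have hW : (0:ℝ) ≤ ‖w‖ ^ 2 := by positivity
      have ht : 0 < t := by positivity
      have htW : t * ‖w‖ ^ 2 + t = ε := by
        rw [htdef]
        field_simp
      have hk := key t ht
      nlinarith [hk, ht, htW]
    have hDle : DD u x w ≤ u y - u x := by
      have := DD_le_slopeD hu x w one_pos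
      have hs1 : slopeD u x w 1 = u y - u x := by
        rw [slopeD]
        simp [hw]
      rwa [hs1] at this
    have hinn : (inner ℝ (-(l x)) w : ℝ) = -(inner ℝ (l x) w : ℝ) := by
      rw [inner_neg_left]
    show u x + (inner ℝ (-(l x)) w : ℝ) ≤ u y
    rw [hinn]
    linarith [hfin, hDle]

end Stmt10Aux

open Stmt10Aux

/-- a convex function whose subdifferential admits d−k+1 uniformly
separated measurable selections along a DC_k set. -/
theorem stmt10 (d k : ℕ) (hd : 1 ≤ d) (hk : k + 1 ≤ d)
    (A : Set (E d)) (Φ : E k → E d) (hΦ : IsDCParam k d Φ) (hA : A = Set.range Φ) :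
    ∃ φ : E d → ℝ, ConvexOn ℝ Set.univ φ ∧
      ∃ f : ℕ → E d → E d,
        (∀ j ∈ Finset.Icc k d, Measurable (f j)) ∧
        (∀ j ∈ Finset.Icc k d, ∀ x, f j x ∈ subdiff φ x) ∧
        (∀ x ∈ A, ∀ j ∈ Finset.Icc k d, ∀ l ∈ Finset.Icc k d, j ≠ l →
          1 ≤ dist (f j x) (f l x)) := by
  classical
  obtain ⟨σ, φv, ψv, hφv, hψv, hΦeq⟩ := hΦ
  have hkd : k ≤ d := Nat.le_of_succ_le hk
  set π : E d → E k := fun x => WithLp.toLp 2 (fun a => x (σ (Fin.castLE hkd a))) with hπdef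
  have hπlin : ∀ (c₁ c₂ : ℝ) (x y : E d), π (c₁ • x + c₂ • y) = c₁ • π x + c₂ • π y := by
    intro c₁ c₂ x y
    ext a
    simp [hπdef, PiLp.add_apply, PiLp.smul_apply, smul_eq_mul]
  set V : Finset (Fin d) := Finset.univ.filter (fun i : Fin d => k ≤ (i : ℕ)) with hVdef
  set C : ℕ → E d → ℝ :=
    fun j x => ∑ i ∈ V, (if (i:ℕ) < j then φv i (π x) else ψv i (π x)) with hCdef
  set Lin : ℕ → E d → ℝ := fun j x => ∑ i ∈ V, (if (i:ℕ) < j then x (σ i) else 0) with hLindef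
  set B : ℕ → E d → ℝ := fun j x => C j x - Lin j x with hBdef
  have hCconv : ∀ j : ℕ, ConvexOn ℝ Set.univ (C j) := by
    intro j
    refine ⟨convex_univ, fun x _ y _ a b ha hb hab => ?_⟩
    simp only [hCdef, smul_eq_mul]
    rw [hπlin]
    calc ∑ i ∈ V, (if (i:ℕ) < j then φv i (a • π x + b • π y) else ψv i (a • π x + b • π y))
        ≤ ∑ i ∈ V, (a * (if (i:ℕ) < j then φv i (π x) else ψv i (π x))
            + b * (if (i:ℕ) < j then φv i (π y) else ψv i (π y))) := by
          apply Finset.sum_le_sum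
          intro i _
          split_ifs
          · simpa [smul_eq_mul] using
              (hφv i).2 (Set.mem_univ (π x)) (Set.mem_univ (π y)) ha hb hab
          · simpa [smul_eq_mul] using
              (hψv i).2 (Set.mem_univ (π x)) (Set.mem_univ (π y)) ha hb hab
      _ = a * (∑ i ∈ V, (if (i:ℕ) < j then φv i (π x) else ψv i (π x)))
            + b * (∑ i ∈ V, (if (i:ℕ) < j then φv i (π y) else ψv i (π y))) := by
          rw [Finset.sum_add_distrib, ← Finset.mul_sum, ← Finset.mul_sum]
  have hLinlin : ∀ (j : ℕ) (c₁ c₂ : ℝ) (x y : E d),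
      Lin j (c₁ • x + c₂ • y) = c₁ * Lin j x + c₂ * Lin j y := by
    intro j c₁ c₂ x y
    simp only [hLindef]
    have hterm : ∀ i ∈ V, (if (i:ℕ) < j then (c₁ • x + c₂ • y) (σ i) else 0)
        = c₁ * (if (i:ℕ) < j then x (σ i) else 0) + c₂ * (if (i:ℕ) < j then y (σ i) else 0) := by
      intro i _
      split_ifs
      · simp [PiLp.add_apply, PiLp.smul_apply, smul_eq_mul]
      · ring
    rw [Finset.sum_congr rfl hterm, Finset.sum_add_distrib, ← Finset.mul_sum, ← Finset.mul_sum]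
  have hBconv : ∀ j : ℕ, ConvexOn ℝ Set.univ (B j) := by
    intro j
    refine ⟨convex_univ, fun x _ y _ a b ha hb hab => ?_⟩
    simp only [hBdef, smul_eq_mul]
    have h1 := (hCconv j).2 (Set.mem_univ x) (Set.mem_univ y) ha hb hab
    simp only [smul_eq_mul] at h1
    rw [hLinlin]
    linarith
  choose gC hgCmeas hgCsub using fun j : ℕ => exists_meas_subgrad (C j) (hCconv j)
  set Ej : ℕ → E d := fun j =>
    ∑ i ∈ V.filter (fun i : Fin d => (i:ℕ) < j), EuclideanSpace.single (σ i) (1:ℝ) with hEjdef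
  have hEinner : ∀ (j : ℕ) (z : E d), (inner ℝ (Ej j) z : ℝ) = Lin j z := by
    intro j z
    simp only [hEjdef]
    rw [sum_inner]
    have h1 : ∀ i ∈ V.filter (fun i : Fin d => (i:ℕ) < j),
        (inner ℝ (EuclideanSpace.single (σ i) (1:ℝ)) z : ℝ) = z (σ i) := by
      intro i _
      rw [EuclideanSpace.inner_single_left]
      simp
    rw [Finset.sum_congr rfl h1, Finset.sum_filter]
  have hLinsub : ∀ (j : ℕ) (x y : E d), Lin j (y - x) = Lin j y - Lin j x := by
    intro j x y
    simp only [hLindef]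
    have hterm : ∀ i ∈ V, (if (i:ℕ) < j then (y - x) (σ i) else 0)
        = (if (i:ℕ) < j then y (σ i) else 0) - (if (i:ℕ) < j then x (σ i) else 0) := by
      intro i _
      split_ifs
      · simp [PiLp.sub_apply]
      · ring
    rw [Finset.sum_congr rfl hterm, Finset.sum_sub_distrib]
  set gB : ℕ → E d → E d := fun j x => gC j x - Ej j with hgBdef
  have hgBsub : ∀ (j : ℕ) (x : E d), gB j x ∈ subdiff (B j) x := by
    intro j x y
    have h1 := hgCsub j x y
    have h2 : (inner ℝ (gB j x) (y - x) : ℝ)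
        = inner ℝ (gC j x) (y - x) - (Lin j y - Lin j x) := by
      simp only [hgBdef]
      rw [inner_sub_left, hEinner, hLinsub]
    show B j x + (inner ℝ (gB j x) (y - x) : ℝ) ≤ B j y
    simp only [hBdef]
    rw [h2]
    linarith
  have hπsingle : ∀ (x : E d) (i : Fin d), i ∈ V → ∀ c : ℝ,
      π (x + c • EuclideanSpace.single (σ i) (1:ℝ)) = π x := by
    intro x i hi c
    ext a
    simp only [hπdef, PiLp.add_apply, PiLp.smul_apply, smul_eq_mul]
    have hik : k ≤ (i:ℕ) := by
      simp only [hVdef, Finset.mem_filter] at hi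
      exact hi.2
    have hne : σ (Fin.castLE hkd a) ≠ σ i := by
      intro hcontra
      have h := σ.injective hcontra
      have hval : ((Fin.castLE hkd a : Fin d) : ℕ) = (i:ℕ) := congrArg Fin.val h
      simp only [Fin.coe_castLE] at hval
      have := a.isLt
      omega
    rw [EuclideanSpace.single_apply, if_neg hne]
    ring
  have hvert : ∀ (j : ℕ) (x : E d) (i : Fin d), i ∈ V → gC j x (σ i) = 0 := by
    intro j x i hi
    have hCc : ∀ c : ℝ, C j (x + c • EuclideanSpace.single (σ i) (1:ℝ)) = C j x := by
      intro c
      simp only [hCdef]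
      rw [hπsingle x i hi c]
    have hsub : ∀ c : ℝ, c * gC j x (σ i) ≤ 0 := by
      intro c
      have h := hgCsub j x (x + c • EuclideanSpace.single (σ i) (1:ℝ))
      rw [hCc c] at h
      have he : (x + c • EuclideanSpace.single (σ i) (1:ℝ)) - x
          = c • EuclideanSpace.single (σ i) (1:ℝ) := by abel
      rw [he, real_inner_smul_right] at h
      have his : (inner ℝ (gC j x) (EuclideanSpace.single (σ i) (1:ℝ)) : ℝ) = gC j x (σ i) := by
        rw [EuclideanSpace.inner_single_right]
        simp
      rw [his] at h
      linarith
    have h1 := hsub 1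
    have h2 := hsub (-1)
    linarith
  have hne : (Finset.Icc k d).Nonempty := ⟨k, Finset.mem_Icc.mpr ⟨le_refl k, hkd⟩⟩
  set φtot : E d → ℝ := fun x => (Finset.Icc k d).sup' hne (fun j => B j x) with hφtotdef
  have hφconv : ConvexOn ℝ Set.univ φtot := by
    refine ⟨convex_univ, fun x _ y _ a b ha hb hab => ?_⟩
    simp only [hφtotdef, smul_eq_mul]
    apply Finset.sup'_le
    intro j hj
    have h1 := (hBconv j).2 (Set.mem_univ x) (Set.mem_univ y) ha hb hab
    simp only [smul_eq_mul] at h1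
    calc B j (a • x + b • y) ≤ a * B j x + b * B j y := h1
      _ ≤ a * (Finset.Icc k d).sup' hne (fun j => B j x)
            + b * (Finset.Icc k d).sup' hne (fun j => B j y) :=
        add_le_add (mul_le_mul_of_nonneg_left (Finset.le_sup' (fun j => B j x) hj) ha)
          (mul_le_mul_of_nonneg_left (Finset.le_sup' (fun j => B j y) hj) hb)
  have hφcont : Continuous φtot := convexOn_continuous hφconv
  obtain ⟨gT, hgTmeas, hgTsub⟩ := exists_meas_subgrad φtot hφconv
  set f : ℕ → E d → E d := fun j x => if B j x = φtot x then gB j x else gT x with hfdef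
  have hBcont : ∀ j : ℕ, Continuous (B j) := fun j => convexOn_continuous (hBconv j)
  refine ⟨φtot, hφconv, f, ?_, ?_, ?_⟩
  · intro j _
    have hsetm : MeasurableSet {x : E d | B j x = φtot x} :=
      measurableSet_eq_fun (hBcont j).measurable hφcont.measurable
    exact Measurable.ite hsetm ((hgCmeas j).sub measurable_const) hgTmeas
  · intro j hj x
    by_cases hcase : B j x = φtot x
    · have hfx : f j x = gB j x := by simp only [hfdef, if_pos hcase]
      rw [hfx]
      intro y
      have h1 := hgBsub j x y
      calc φtot x + (inner ℝ (gB j x) (y - x) : ℝ)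
          = B j x + (inner ℝ (gB j x) (y - x) : ℝ) := by rw [hcase]
        _ ≤ B j y := h1
        _ ≤ φtot y := Finset.le_sup' (fun j => B j y) hj
    · have hfx : f j x = gT x := by simp only [hfdef, if_neg hcase]
      rw [hfx]
      exact hgTsub x
  · intro x hx j hj l hl hjl
    rw [hA] at hx
    obtain ⟨X, rfl⟩ := hx
    have hπX : π (Φ X) = X := by
      ext a
      simp only [hπdef]
      rw [hΦeq X (Fin.castLE hkd a)]
      rw [dif_pos (show ((Fin.castLE hkd a : Fin d) : ℕ) < k by simpa using a.isLt)]
      exact congrArg X (Fin.ext (by simp))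
    have hcoord : ∀ i ∈ V, (Φ X) (σ i) = φv i X - ψv i X := by
      intro i hi
      simp only [hVdef, Finset.mem_filter] at hi
      rw [hΦeq X i, dif_neg (by omega)]
    have hBeq : ∀ j' : ℕ, B j' (Φ X) = ∑ i ∈ V, ψv i X := by
      intro j'
      simp only [hBdef, hCdef, hLindef]
      rw [← Finset.sum_sub_distrib]
      apply Finset.sum_congr rfl
      intro i hi
      rw [hπX]
      split_ifs with h
      · rw [hcoord i hi]; ring
      · ring
    have hsup : ∀ j' ∈ Finset.Icc k d, B j' (Φ X) = φtot (Φ X) := by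
      intro j' hj'
      simp only [hφtotdef]
      obtain ⟨j₀, hj₀, hj₀eq⟩ := Finset.exists_mem_eq_sup' hne (fun j => B j (Φ X))
      rw [hj₀eq, hBeq j₀, hBeq j']
    have hfj : f j (Φ X) = gB j (Φ X) := by simp only [hfdef, if_pos (hsup j hj)]
    have hfl : f l (Φ X) = gB l (Φ X) := by simp only [hfdef, if_pos (hsup l hl)]
    have main : ∀ j' l' : ℕ, j' ∈ Finset.Icc k d → l' ∈ Finset.Icc k d → j' < l' →
        1 ≤ dist (gB j' (Φ X)) (gB l' (Φ X)) := by
      intro j' l' hj' hl' hlt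
      have hj'k : k ≤ j' := (Finset.mem_Icc.mp hj').1
      have hl'd : l' ≤ d := (Finset.mem_Icc.mp hl').2
      set i₀ : Fin d := ⟨j', lt_of_lt_of_le hlt hl'd⟩ with hi₀def
      have hi₀V : i₀ ∈ V := by
        simp only [hVdef, Finset.mem_filter]
        exact ⟨Finset.mem_univ _, hj'k⟩
      have hinE : ∀ jj : ℕ, (inner ℝ (EuclideanSpace.single (σ i₀) (1:ℝ)) (Ej jj) : ℝ)
          = if i₀ ∈ V.filter (fun i : Fin d => (i:ℕ) < jj) then 1 else 0 := by
        intro jj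
        simp only [hEjdef]
        rw [inner_sum]
        have hterm : ∀ i ∈ V.filter (fun i : Fin d => (i:ℕ) < jj),
            (inner ℝ (EuclideanSpace.single (σ i₀) (1:ℝ))
              (EuclideanSpace.single (σ i) (1:ℝ)) : ℝ) = if i₀ = i then 1 else 0 := by
          intro i _
          rw [EuclideanSpace.inner_single_left]
          simp only [map_one, one_mul, EuclideanSpace.single_apply]
          by_cases h : i₀ = i
          · subst h; simp
          · rw [if_neg (fun hcontra => h (σ.injective hcontra)), if_neg h]
        rw [Finset.sum_congr rfl hterm, Finset.sum_ite_eq]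
      have hing : ∀ jj : ℕ,
          (inner ℝ (EuclideanSpace.single (σ i₀) (1:ℝ)) (gC jj (Φ X)) : ℝ) = 0 := by
        intro jj
        rw [EuclideanSpace.inner_single_left]
        simp [hvert jj (Φ X) i₀ hi₀V]
      have hval : (inner ℝ (EuclideanSpace.single (σ i₀) (1:ℝ))
          (gB j' (Φ X) - gB l' (Φ X)) : ℝ) = 1 := by
        simp only [hgBdef]
        rw [inner_sub_right, inner_sub_right, inner_sub_right, hing, hing, hinE, hinE]
        rw [if_neg, if_pos]
        · norm_num
        · simp only [Finset.mem_filter, hVdef]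
          refine ⟨⟨Finset.mem_univ _, hj'k⟩, ?_⟩
          show (i₀ : ℕ) < l'
          simp only [hi₀def]
          omega
        · simp only [Finset.mem_filter, hVdef]
          rintro ⟨-, hcon⟩
          have : (i₀ : ℕ) < j' := hcon
          simp only [hi₀def] at this
          omega
      have hcs := abs_real_inner_le_norm (EuclideanSpace.single (σ i₀) (1:ℝ))
        (gB j' (Φ X) - gB l' (Φ X))
      rw [hval, EuclideanSpace.norm_single] at hcs
      rw [dist_eq_norm]
      simpa using hcs
    rcases lt_or_gt_of_ne hjl with hlt | hlt
    · rw [hfj, hfl]; exact main j l hj hl hlt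
    · rw [hfj, hfl, dist_comm]; exact main l j hl hj hlt

end
end
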